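/- arXiv:0806.4500 — 12 statements merged into one kernel-verified Lean document; each statement's English description precedes it below -/
import Mathlib

section
/- Let k be an algebraically closed field, G a group, and M a finite-dimensional representation of G over k that is self-dual, i.e., G-equivariantly isomorphic to its dual representation M*. Let r and t be integers with 0 ≤ t ≤ r and r − t even. If t ≥ 1, or if the image of dim_k M in k is nonzero, then M^{⊗t} is a direct summand of M^{⊗r} as representations of G: there exist G-equivariant linear maps ι : M^{⊗t} → M^{⊗r} and π : M^{⊗r} → M^{⊗t} with π ∘ ι = id. -/
open TensorProduct

/-!
A `G`-invariant nondegenerate pairing identifies `M*` with `M`, so evaluation `M* ⊗ M → k` and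
coevaluation `k → M ⊗ M*` become equivariant maps `M ⊗ M → k` and `k → M ⊗ M`. By the snake
identity, `v ↦ coev 1 ⊗ v` followed by contracting the last two factors is the identity, so `M` is
a direct summand of `M^{⊗3}`; and `ev (coev 1) = dim M`, so if `dim M ≠ 0` in `k` the trivial
representation is a direct summand of `M^{⊗2}`. Tensoring with `M^{⊗c}` and iterating gives
`M^{⊗t}` as a direct summand of `M^{⊗(t + 2m)}`.
-/

section Coevaluation

variable {k V : Type*} [Field k] [AddCommGroup V] [Module k V] [FiniteDimensional k V]

theorem dualTensorHom_comm_coevaluation :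
    dualTensorHom k V V (TensorProduct.comm k V (Module.Dual k V) (coevaluation k V 1)) =
      LinearMap.id := by
  ext v
  simpa [coevaluation_apply_one, dualTensorHom_apply] using
    (Module.Basis.ofVectorSpace k V).sum_repr v

theorem contractLeft_comm_coevaluation :
    contractLeft k V (TensorProduct.comm k V (Module.Dual k V) (coevaluation k V 1)) =
      Module.finrank k V := by
  simp only [coevaluation_apply_one, map_sum, comm_tmul, contractLeft_apply,
    Module.Basis.coord_apply, Module.Basis.repr_self, Finsupp.single_eq_same, Finset.sum_const,
    Finset.card_univ, nsmul_eq_mul, mul_one,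
    Module.finrank_eq_card_basis (Module.Basis.ofVectorSpace k V)]

end Coevaluation

namespace Representation

section DirectSummand

variable {A G V W U P : Type*} [CommRing A] [Monoid G]
  [AddCommGroup V] [AddCommGroup W] [AddCommGroup U] [AddCommGroup P]
  [Module A V] [Module A W] [Module A U] [Module A P]
  {ρ : Representation A G V} {σ : Representation A G W}
  {τ : Representation A G U} {υ : Representation A G P}

def IsDirectSummand (ρ : Representation A G V) (σ : Representation A G W) : Prop :=
  ∃ (ι : ρ.IntertwiningMap σ) (π : σ.IntertwiningMap ρ), π.comp ι = .id ρ

theorem IsDirectSummand.refl (ρ : Representation A G V) : IsDirectSummand ρ ρ :=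
  ⟨.id ρ, .id ρ, rfl⟩

theorem IsDirectSummand.trans (h₁ : IsDirectSummand ρ σ) (h₂ : IsDirectSummand σ τ) :
    IsDirectSummand ρ τ := by
  obtain ⟨ι₁, π₁, h₁⟩ := h₁
  obtain ⟨ι₂, π₂, h₂⟩ := h₂
  refine ⟨ι₂.comp ι₁, π₁.comp π₂, IntertwiningMap.ext (LinearMap.ext fun v => ?_)⟩
  have h₂v : π₂ (ι₂ (ι₁ v)) = ι₁ v := congr($h₂ (ι₁ v))
  simpa [h₂v] using congr($h₁ v)

theorem Equiv.isDirectSummand (φ : ρ.Equiv σ) : IsDirectSummand ρ σ :=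
  ⟨φ.toIntertwiningMap, φ.symm.toIntertwiningMap, by ext; simp⟩

theorem IsDirectSummand.tprod (h₁ : IsDirectSummand ρ σ) (h₂ : IsDirectSummand τ υ) :
    IsDirectSummand (ρ.tprod τ) (σ.tprod υ) := by
  obtain ⟨ι₁, π₁, h₁⟩ := h₁
  obtain ⟨ι₂, π₂, h₂⟩ := h₂
  refine ⟨ι₁.tensor ι₂, π₁.tensor π₂, IntertwiningMap.ext <| TensorProduct.ext' fun v u => ?_⟩
  simpa using congr($h₁ v ⊗ₜ[A] $h₂ u)

end DirectSummand

section TensorPower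

variable {A G V : Type*} [CommRing A] [Monoid G] [AddCommGroup V] [Module A V]
  (ρ : Representation A G V)

noncomputable def tensorPower (n : ℕ) : Representation A G (⨂[A]^n V) where
  toFun g := PiTensorProduct.map fun _ => ρ g
  map_one' := by simp only [map_one]; exact PiTensorProduct.map_id
  map_mul' g h := by simp only [map_mul]; exact PiTensorProduct.map_mul _ _

theorem tensorPower_apply_tprod (n : ℕ) (g : G) (v : Fin n → V) :
    ρ.tensorPower n g (PiTensorProduct.tprod A v) = PiTensorProduct.tprod A fun i => ρ g (v i) :=
  PiTensorProduct.map_tprod _ _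

noncomputable def tensorPowerZeroEquiv : (ρ.tensorPower 0).Equiv (trivial A G A) :=
  .mk (PiTensorProduct.isEmptyEquiv (Fin 0)) fun g => by
    ext v
    simp [tensorPower_apply_tprod]

noncomputable def tensorPowerOneEquiv : (ρ.tensorPower 1).Equiv ρ :=
  .mk (PiTensorProduct.subsingletonEquiv 0) fun g => by
    ext v
    simp [tensorPower_apply_tprod]

noncomputable def tensorPowerAddEquiv (n m : ℕ) :
    ((ρ.tensorPower n).tprod (ρ.tensorPower m)).Equiv (ρ.tensorPower (n + m)) :=
  .mk TensorPower.mulEquiv fun g => by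
    ext v w
    simp only [tprod_apply, LinearMap.compMultilinearMap_apply, AlgebraTensorModule.curry_apply,
      LinearMap.restrictScalars_self, curry_apply, LinearMap.coe_comp, LinearEquiv.coe_coe,
      Function.comp_apply, map_tmul, tensorPower_apply_tprod, ← TensorPower.gMul_def,
      TensorPower.tprod_mul_tprod]
    congr 1
    ext i
    refine Fin.addCases (fun i => ?_) (fun i => ?_) i <;> simp

variable {ρ}

theorem IsDirectSummand.tprod_tensorPower_add {W U : Type*} [AddCommGroup W] [Module A W]
    [AddCommGroup U] [Module A U] {σ : Representation A G W} {τ : Representation A G U}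
    {a b : ℕ}
    (h₁ : IsDirectSummand σ (ρ.tensorPower a)) (h₂ : IsDirectSummand τ (ρ.tensorPower b)) :
    IsDirectSummand (σ.tprod τ) (ρ.tensorPower (a + b)) :=
  (h₁.tprod h₂).trans (ρ.tensorPowerAddEquiv a b).isDirectSummand

theorem IsDirectSummand.tensorPower_add_left {a b : ℕ}
    (h : IsDirectSummand (ρ.tensorPower a) (ρ.tensorPower b)) (c : ℕ) :
    IsDirectSummand (ρ.tensorPower (c + a)) (ρ.tensorPower (c + b)) :=
  (ρ.tensorPowerAddEquiv c a).symm.isDirectSummand.trans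
    ((IsDirectSummand.refl _).tprod_tensorPower_add h)

theorem IsDirectSummand.tensorPower_add_two_mul {a : ℕ}
    (h : IsDirectSummand (ρ.tensorPower a) (ρ.tensorPower (a + 2))) (c m : ℕ) :
    IsDirectSummand (ρ.tensorPower (c + a)) (ρ.tensorPower (c + a + 2 * m)) := by
  induction m with
  | zero => exact .refl _
  | succ m ih =>
    rw [show c + a + 2 * m = c + 2 * m + a by ring] at ih
    rw [show c + a + 2 * (m + 1) = c + 2 * m + (a + 2) by ring]
    exact ih.trans (h.tensorPower_add_left (c + 2 * m))

end TensorPower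

section Duality

variable {k G V : Type*} [Field k] [Group G] [AddCommGroup V] [Module k V]
  [FiniteDimensional k V] (ρ : Representation k G V)

noncomputable def IntertwiningMap.coevaluation :
    (trivial k G k).IntertwiningMap (ρ.tprod ρ.dual) :=
  ⟨_root_.coevaluation k V, fun g => LinearMap.ext_ring <| by
    -- `coevaluation k V 1` corresponds to `id` under `V ⊗ V* ≃ End V`, and `id` is `G`-fixed.
    let Φ := (TensorProduct.comm ρ ρ.dual).trans (Equiv.dualTensorHom ρ ρ)
    have hΦ : Φ (_root_.coevaluation k V 1) = LinearMap.id := dualTensorHom_comm_coevaluation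
    have key : Φ ((ρ.tprod ρ.dual) g (_root_.coevaluation k V 1)) =
        Φ (_root_.coevaluation k V 1) := by
      rw [← Equiv.coe_toIntertwiningMap, IntertwiningMap.isIntertwining,
        Equiv.coe_toIntertwiningMap, hΦ, linHom_apply, LinearMap.id_comp,
        ← Module.End.mul_eq_comp, ← map_mul, mul_inv_cancel, map_one, Module.End.one_eq_id]
    exact (Φ.toLinearEquiv.injective key).symm⟩

noncomputable def IntertwiningMap.contractLeft :
    (ρ.dual.tprod ρ).IntertwiningMap (trivial k G k) :=
  ⟨_root_.contractLeft k V, fun g => TensorProduct.ext' fun f v => by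
    simp [dual_apply, Module.Dual.transpose_apply, inv_self_apply]⟩

theorem isDirectSummand_tprod_dual_tprod : IsDirectSummand ρ ((ρ.tprod ρ.dual).tprod ρ) := by
  refine ⟨((IntertwiningMap.coevaluation ρ).rTensor ρ).comp
      (TensorProduct.lid k ρ).symm.toIntertwiningMap,
    (TensorProduct.rid k ρ).toIntertwiningMap.comp
      (((IntertwiningMap.contractLeft ρ).lTensor ρ).comp
        (TensorProduct.assoc ρ ρ.dual ρ).toIntertwiningMap), ?_⟩
  ext v
  have h := congr($(contractLeft_assoc_coevaluation' k V) (1 ⊗ₜ v))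
  simp only [LinearMap.coe_comp, Function.comp_apply, LinearEquiv.coe_coe, LinearMap.rTensor_tmul,
    lid_tmul, one_smul] at h
  simp [IntertwiningMap.coevaluation, IntertwiningMap.contractLeft, h]

theorem trivial_isDirectSummand_tprod_dual (hV : (Module.finrank k V : k) ≠ 0) :
    IsDirectSummand (trivial k G k) (ρ.tprod ρ.dual) := by
  refine ⟨IntertwiningMap.coevaluation ρ, (Module.finrank k V : k)⁻¹ •
    (IntertwiningMap.contractLeft ρ).comp (TensorProduct.comm ρ ρ.dual).toIntertwiningMap, ?_⟩
  ext
  simp [IntertwiningMap.coevaluation, IntertwiningMap.contractLeft,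
    contractLeft_comm_coevaluation, hV]

variable {ρ}

theorem Equiv.isDirectSummand_tensorPower_one_three (φ : ρ.Equiv ρ.dual) :
    IsDirectSummand (ρ.tensorPower 1) (ρ.tensorPower 3) :=
  have hρ : IsDirectSummand ρ (ρ.tensorPower 1) := ρ.tensorPowerOneEquiv.symm.isDirectSummand
  ρ.tensorPowerOneEquiv.isDirectSummand.trans <| (isDirectSummand_tprod_dual_tprod ρ).trans <|
    (((IsDirectSummand.refl ρ).tprod φ.symm.isDirectSummand).tprod (.refl ρ)).trans
      ((hρ.tprod_tensorPower_add hρ).tprod_tensorPower_add hρ)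

theorem Equiv.isDirectSummand_tensorPower_zero_two (φ : ρ.Equiv ρ.dual)
    (hV : (Module.finrank k V : k) ≠ 0) :
    IsDirectSummand (ρ.tensorPower 0) (ρ.tensorPower 2) :=
  have hρ : IsDirectSummand ρ (ρ.tensorPower 1) := ρ.tensorPowerOneEquiv.symm.isDirectSummand
  ρ.tensorPowerZeroEquiv.isDirectSummand.trans <|
    (trivial_isDirectSummand_tprod_dual ρ hV).trans <|
      ((IsDirectSummand.refl ρ).tprod φ.symm.isDirectSummand).trans (hρ.tprod_tensorPower_add hρ)

end Duality

end Representation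

theorem stmt2_general (k : Type*) [Field k] (G : Type*) [Group G]
    (M : Type*) [AddCommGroup M] [Module k M] [FiniteDimensional k M]
    (ρ : Representation k G M)
    (e : M ≃ₗ[k] Module.Dual k M)
    (he : ∀ (g : G) (v : M), e (ρ g v) = (e v) ∘ₗ (ρ g⁻¹))
    (r t : ℕ) (htr : t ≤ r) (heven : Even (r - t))
    (h : 1 ≤ t ∨ (Module.finrank k M : k) ≠ 0) :
    ∃ (ι : (⨂[k]^t M) →ₗ[k] ⨂[k]^r M) (π : (⨂[k]^r M) →ₗ[k] ⨂[k]^t M),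
      (∀ (g : G) (x : ⨂[k]^t M),
        ι (PiTensorProduct.map (fun _ => ρ g) x)
          = PiTensorProduct.map (fun _ => ρ g) (ι x)) ∧
      (∀ (g : G) (y : ⨂[k]^r M),
        π (PiTensorProduct.map (fun _ => ρ g) y)
          = PiTensorProduct.map (fun _ => ρ g) (π y)) ∧
      π.comp ι = LinearMap.id := by
  let φ : ρ.Equiv ρ.dual := .mk e fun g => LinearMap.ext fun v => by
    simp [he, Representation.dual_apply, Module.Dual.transpose_apply]
  obtain ⟨m, hm⟩ := heven
  obtain rfl : r = t + 2 * m := by omega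
  have hsummand : (ρ.tensorPower t).IsDirectSummand (ρ.tensorPower (t + 2 * m)) := by
    rcases h with ht | hV
    · obtain ⟨c, rfl⟩ := Nat.exists_eq_add_of_le' ht
      exact φ.isDirectSummand_tensorPower_one_three.tensorPower_add_two_mul c m
    · exact (φ.isDirectSummand_tensorPower_zero_two hV).tensorPower_add_two_mul t m
  obtain ⟨ι, π, hπι⟩ := hsummand
  exact ⟨ι.toLinearMap, π.toLinearMap, ι.isIntertwining _ _, π.isIntertwining _ _,
    congr(($hπι).toLinearMap)⟩

/-- Let `M` be a finite dimensional self-dual representation of a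
group `G` over an algebraically closed field `k` (self-dual: there is a
`G`-equivariant isomorphism `e : M ≃ M*`, where `(g·φ)(v) = φ(g⁻¹ v)`).
Let `0 ≤ t ≤ r` with `r - t` even.  If `t ≥ 1` or `dim M ≠ 0` in `k`, then
`M^{⊗t}` is a direct summand of `M^{⊗r}` as representations of `G` (with the
diagonal action on tensor powers; `M^{⊗0}` is the trivial representation `k`). -/
theorem stmt2 (k : Type*) [Field k] [IsAlgClosed k] (G : Type*) [Group G]
    (M : Type*) [AddCommGroup M] [Module k M] [FiniteDimensional k M]
    (ρ : Representation k G M)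
    (e : M ≃ₗ[k] Module.Dual k M)
    (he : ∀ (g : G) (v : M), e (ρ g v) = (e v) ∘ₗ (ρ g⁻¹))
    (r t : ℕ) (htr : t ≤ r) (heven : Even (r - t))
    (h : 1 ≤ t ∨ (Module.finrank k M : k) ≠ 0) :
    ∃ (ι : (⨂[k]^t M) →ₗ[k] ⨂[k]^r M) (π : (⨂[k]^r M) →ₗ[k] ⨂[k]^t M),
      (∀ (g : G) (x : ⨂[k]^t M),
        ι (PiTensorProduct.map (fun _ => ρ g) x)
          = PiTensorProduct.map (fun _ => ρ g) (ι x)) ∧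
      (∀ (g : G) (y : ⨂[k]^r M),
        π (PiTensorProduct.map (fun _ => ρ g) y)
          = PiTensorProduct.map (fun _ => ρ g) (π y)) ∧
      π.comp ι = LinearMap.id :=
  stmt2_general k G M ρ e he r t htr heven h
end

section
/- Let r ≥ 1 and let λ, μ ∈ ℝ^r be strictly decreasing tuples. If μ = w(λ) for some signed permutation w (i.e., λ and μ are conjugate under the Weyl group W(C_r)), then λ ∩ μ = w'(λ) for some signed permutation w' (i.e., λ and λ ∩ μ are conjugate under W(C_r)). -/
/-!
A tuple `y` is a signed permutation of `x` exactly when `|y|` is a permutation of `|x|`, and a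
tuple over a linear order is determined up to permutation by its tail counts
`t ↦ #{i | t < x i}` (sort both tuples). For `t ≥ 0` we have
`#{i | t < |x i|} = #{i | t < x i} + #{i | x i < -t}`. For decreasing `λ` and `μ` the sets
`{i | t < λ i}` and `{i | t < μ i}` are nested initial segments, and `{i | λ i < -t}`,
`{i | μ i < -t}` nested final segments; so for `ν = λ ∩ μ` the two summands are `min a c` and
`max b d`, where `a + b = c + d` are the summands for `λ` and `μ`. As `a ≤ c` forces `b ≥ d`,
the total is again `a + b`.
-/

/-- `y` is obtained from `x` by a signed permutation, i.e. `x` and `y` are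
conjugate under the Weyl group `W(C_r)` acting on `ℝ^r` by signed permutations. -/
def IsSignedPermOf {r : ℕ} (x y : Fin r → ℝ) : Prop :=
  ∃ (σ : Equiv.Perm (Fin r)) (ε : Fin r → ℝ),
    (∀ i, ε i = 1 ∨ ε i = -1) ∧ ∀ i, y i = ε i * x (σ i)

open Finset

section NestedCard

variable {ι : Type*} [DecidableEq ι] {s t : Finset ι}

theorem Finset.card_inter_eq_min_of_subset_or (h : s ⊆ t ∨ t ⊆ s) :
    #(s ∩ t) = min #s #t := by
  rcases h with h | h
  · rw [inter_eq_left.2 h, min_eq_left (card_le_card h)]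
  · rw [inter_eq_right.2 h, min_eq_right (card_le_card h)]

theorem Finset.card_union_eq_max_of_subset_or (h : s ⊆ t ∨ t ⊆ s) :
    #(s ∪ t) = max #s #t := by
  rcases h with h | h
  · rw [union_eq_right.2 h, max_eq_right (card_le_card h)]
  · rw [union_eq_left.2 h, max_eq_left (card_le_card h)]

end NestedCard

section ThresholdCount

variable {ι α : Type*} [Fintype ι] [LinearOrder ι]

theorem Finset.filter_univ_subset_total_of_antitone {p q : ι → Prop} [DecidablePred p]
    [DecidablePred q] (hp : Antitone p) (hq : Antitone q) :
    univ.filter p ⊆ univ.filter q ∨ univ.filter q ⊆ univ.filter p := by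
  simpa [← coe_subset] using (isLowerSet_setOfPred.2 hp).total (isLowerSet_setOfPred.2 hq)

theorem Finset.filter_univ_subset_total_of_monotone {p q : ι → Prop} [DecidablePred p]
    [DecidablePred q] (hp : Monotone p) (hq : Monotone q) :
    univ.filter p ⊆ univ.filter q ∨ univ.filter q ⊆ univ.filter p := by
  simpa [← coe_subset] using (isUpperSet_setOfPred.2 hp).total (isUpperSet_setOfPred.2 hq)

variable [LinearOrder α] {f g : ι → α}

theorem card_lt_min_of_antitone (hf : Antitone f) (hg : Antitone g) (t : α) :
    #{i | t < min (f i) (g i)} = min #{i | t < f i} #{i | t < g i} := by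
  simp only [lt_min_iff, filter_and]
  exact card_inter_eq_min_of_subset_or <| filter_univ_subset_total_of_antitone
    (fun _ _ hij h => h.trans_le (hf hij)) (fun _ _ hij h => h.trans_le (hg hij))

theorem card_min_lt_of_antitone (hf : Antitone f) (hg : Antitone g) (t : α) :
    #{i | min (f i) (g i) < t} = max #{i | f i < t} #{i | g i < t} := by
  simp only [min_lt_iff, filter_or]
  exact card_union_eq_max_of_subset_or <| filter_univ_subset_total_of_monotone
    (fun _ _ hij h => (hf hij).trans_lt h) (fun _ _ hij h => (hg hij).trans_lt h)

end ThresholdCount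

theorem Finset.card_filter_univ_comp_perm {ι : Type*} [Fintype ι] (p : ι → Prop)
    [DecidablePred p] (σ : Equiv.Perm ι) : #{i | p (σ i)} = #{i | p i} :=
  card_equiv σ (by simp)

theorem card_lt_abs_eq_add {ι α : Type*} [Fintype ι] [AddCommGroup α] [LinearOrder α]
    [IsOrderedAddMonoid α] (x : ι → α) {t : α} (ht : 0 ≤ t) :
    #{i | t < |x i|} = #{i | t < x i} + #{i | x i < -t} := by
  classical
  have hdisj : Disjoint ({i | t < x i} : Finset ι) ({i | x i < -t} : Finset ι) :=
    disjoint_filter.2 fun i _ hpos hneg => (hneg.trans_le (neg_le_self ht)).not_gt hpos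
  rw [← card_union_of_disjoint hdisj, ← filter_or]
  simp only [lt_abs, lt_neg]

theorem card_lt_abs_min_of_antitone {ι α : Type*} [Fintype ι] [LinearOrder ι]
    [AddCommGroup α] [LinearOrder α] [IsOrderedAddMonoid α] {f g : ι → α}
    (hf : Antitone f) (hg : Antitone g) (h : ∀ t, #{i | t < |f i|} = #{i | t < |g i|}) (t : α) :
    #{i | t < |min (f i) (g i)|} = #{i | t < |f i|} := by
  rcases lt_or_ge t 0 with ht | ht
  · simp [ht.trans_le (abs_nonneg _)]
  · have hfg := h t
    rw [card_lt_abs_eq_add _ ht, card_lt_abs_eq_add _ ht] at hfg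
    rw [card_lt_abs_eq_add _ ht, card_lt_abs_eq_add _ ht, card_lt_min_of_antitone hf hg,
      card_min_lt_of_antitone hf hg]
    omega

theorem Monotone.le_of_card_lt_le {ι α : Type*} [Fintype ι] [LinearOrder ι]
    [LocallyFiniteOrderTop ι] [LinearOrder α] {f g : ι → α}
    (hf : Monotone f) (hg : Monotone g)
    (h : ∀ t, #{i | t < f i} ≤ #{i | t < g i}) : f ≤ g := by
  intro i
  by_contra! hi
  have hIci : Ici i ⊆ ({j | g i < f j} : Finset ι) := fun j hj =>
    mem_filter.2 ⟨mem_univ j, hi.trans_le (hf (mem_Ici.1 hj))⟩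
  have hIoi : ({j | g i < g j} : Finset ι) ⊆ Ioi i := fun j hj =>
    mem_Ioi.2 (lt_of_not_ge fun hji => (hg hji).not_gt (mem_filter.1 hj).2)
  have := (card_le_card hIci).trans ((h (g i)).trans (card_le_card hIoi))
  rw [← Ioi_insert, card_insert_of_notMem notMem_Ioi_self] at this
  omega

theorem Monotone.eq_of_card_lt_eq {ι α : Type*} [Fintype ι] [LinearOrder ι]
    [LocallyFiniteOrderTop ι] [LinearOrder α] {f g : ι → α}
    (hf : Monotone f) (hg : Monotone g)
    (h : ∀ t, #{i | t < f i} = #{i | t < g i}) : f = g :=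
  le_antisymm (hf.le_of_card_lt_le hg fun t => (h t).le)
    (hg.le_of_card_lt_le hf fun t => (h t).ge)

theorem exists_perm_eq_comp_of_card_lt_eq {n : ℕ} {α : Type*} [LinearOrder α]
    {f g : Fin n → α} (h : ∀ t, #{i | t < f i} = #{i | t < g i}) :
    ∃ σ : Equiv.Perm (Fin n), ∀ i, g i = f (σ i) := by
  have hsorted : f ∘ Tuple.sort f = g ∘ Tuple.sort g :=
    (Tuple.monotone_sort f).eq_of_card_lt_eq (Tuple.monotone_sort g) fun t => by
      simp only [Function.comp_apply, card_filter_univ_comp_perm (fun j => t < f j),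
        card_filter_univ_comp_perm (fun j => t < g j), h]
  refine ⟨(Tuple.sort g).symm.trans (Tuple.sort f), fun i => ?_⟩
  simpa using (congrFun hsorted ((Tuple.sort g).symm i)).symm

theorem isSignedPermOf_iff_exists_abs_eq {r : ℕ} {x y : Fin r → ℝ} :
    IsSignedPermOf x y ↔ ∃ σ : Equiv.Perm (Fin r), ∀ i, |y i| = |x (σ i)| := by
  constructor
  · rintro ⟨σ, ε, hε, hy⟩
    exact ⟨σ, fun i => by rcases hε i with h | h <;> simp [hy i, h]⟩
  · rintro ⟨σ, hσ⟩
    refine ⟨σ, fun i => if y i = x (σ i) then 1 else -1,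
      fun i => by dsimp only; split_ifs <;> simp, fun i => ?_⟩
    dsimp only
    split_ifs with h
    · simp [h]
    · rcases abs_eq_abs.1 (hσ i) with h' | h'
      · exact absurd h' h
      · simp [h']

theorem stmt3_general (r : ℕ) (lam mu : Fin r → ℝ)
    (hlam : StrictAnti lam) (hmu : StrictAnti mu)
    (h : IsSignedPermOf lam mu) :
    IsSignedPermOf lam (fun i => min (lam i) (mu i)) := by
  obtain ⟨σ, hσ⟩ := isSignedPermOf_iff_exists_abs_eq.1 h
  have hcount (t : ℝ) : #{i | t < |lam i|} = #{i | t < |mu i|} := by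
    simp only [hσ, card_filter_univ_comp_perm (fun j => t < |lam j|)]
  exact isSignedPermOf_iff_exists_abs_eq.2 <| exists_perm_eq_comp_of_card_lt_eq fun t =>
    (card_lt_abs_min_of_antitone hlam.antitone hmu.antitone hcount t).symm

/-- If `λ, μ ∈ ℝ^r` are strictly decreasing and conjugate under the
Weyl group `W(C_r)` of signed permutations, then `λ` and the pointwise minimum
`λ ∩ μ` are conjugate under `W(C_r)`. -/
theorem stmt3 (r : ℕ) (hr : 1 ≤ r) (lam mu : Fin r → ℝ)
    (hlam : StrictAnti lam) (hmu : StrictAnti mu)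
    (h : IsSignedPermOf lam mu) :
    IsSignedPermOf lam (fun i => min (lam i) (mu i)) :=
  stmt3_general r lam mu hlam hmu h
end

section
/- Let r ≥ 1, let δ be an integer, and set ρ̂ = (−δ/2, −δ/2 − 1, …, −δ/2 − (r−1)) ∈ ℚ^r ⊆ ℝ^r. Let λ, μ ∈ ℝ^r be weakly decreasing tuples. If μ + ρ̂ = w(λ + ρ̂) for some signed permutation w (i.e., λ and μ are conjugate under the star action of W(C_r)), then (λ ∩ μ) + ρ̂ = w'(λ + ρ̂) for some signed permutation w' (i.e., λ and λ ∩ μ are conjugate under the star action of W(C_r)). -/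
/-! Put `a = λ + ρ̂` and `b = μ + ρ̂`; both are strictly decreasing, and `b i = ε i * a (σ i)`.
The indices where `b < a` are permuted among themselves by `σ`, so `σ` on them and the identity
elsewhere is a signed permutation carrying `a` to `min a b = λ ∩ μ + ρ̂`. To see that `σ` preserves
`{b < a}`: for a sign `+1` this is monotonicity, and for a sign `-1` it follows by comparing how
many `|a k|` and how many `|b k|` lie below `|a (σ i)|`; a signed permutation preserves these
counts. -/

open Finset

section

variable {r : ℕ} {a b : Fin r → ℝ}

theorem IsSignedPermOf.card_filter_abs (h : IsSignedPermOf a b) (p : ℝ → Prop)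
    [DecidablePred p] : #{k | p |b k|} = #{k | p |a k|} := by
  obtain ⟨σ, ε, hε, hab⟩ := h
  refine card_equiv σ fun k => ?_
  rcases hε k with hk | hk <;> simp [hab k, hk]

theorem Fin.card_Ioc_lt_card_Icc {i j : Fin r} (hij : i ≤ j) : #(Ioc i j) < #(Icc i j) := by
  rw [Fin.card_Ioc, Fin.card_Icc]
  have : (i : ℕ) ≤ j := hij
  omega

theorem Fin.card_Ioo_lt_card_Ioc {i j : Fin r} (hij : i < j) : #(Ioo i j) < #(Ioc i j) := by
  rw [Fin.card_Ioo, Fin.card_Ioc]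
  have : (i : ℕ) < j := hij
  omega

namespace IsSignedPermOf

variable (h : IsSignedPermOf a b) (ha : StrictAnti a) (hb : StrictAnti b) {i j : Fin r}
  (hbi : b i = -a j) (hi : b i < a i)
include h ha hb hbi hi

/-- Otherwise every `k ∈ Icc i j` has `|b k| ≤ -a j`, while the indices with `|a k| ≤ -a j` lie in
the smaller `Ioc i j`. -/
theorem lt_of_eq_neg_of_lt_of_lt (hij : i < j) : b j < a j := by
  by_contra! hj
  have hsub : Icc i j ⊆ ({k | |b k| ≤ -a j} : Finset (Fin r)) := fun k hk => by
    rw [mem_Icc] at hk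
    have := hb.antitone hk.1
    have := hb.antitone hk.2
    simp only [mem_filter_univ, abs_le]
    constructor <;> linarith
  have hsup : ({k | |a k| ≤ -a j} : Finset (Fin r)) ⊆ Ioc i j := fun k hk => by
    simp only [mem_filter_univ, abs_le] at hk
    rw [mem_Ioc]
    exact ⟨ha.lt_iff_gt.mp (by linarith), ha.le_iff_ge.mp (by linarith)⟩
  have := card_le_card hsub
  have := card_le_card hsup
  have := h.card_filter_abs (· ≤ -a j)
  have := Fin.card_Ioc_lt_card_Icc hij.le
  omega

/-- Otherwise every `k ∈ Ioc j i` has `|a k| < a j`, while the indices with `|b k| < a j` lie in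
the smaller `Ioo j i`. -/
theorem lt_of_eq_neg_of_lt_of_gt (hji : j < i) : b j < a j := by
  by_contra! hj
  have hsub : Ioc j i ⊆ ({k | |a k| < a j} : Finset (Fin r)) := fun k hk => by
    rw [mem_Ioc] at hk
    have := ha hk.1
    have := ha.antitone hk.2
    simp only [mem_filter_univ, abs_lt]
    constructor <;> linarith
  have hsup : ({k | |b k| < a j} : Finset (Fin r)) ⊆ Ioo j i := fun k hk => by
    simp only [mem_filter_univ, abs_lt] at hk
    rw [mem_Ioo]
    exact ⟨hb.lt_iff_gt.mp (by linarith), hb.lt_iff_gt.mp (by linarith)⟩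
  have := card_le_card hsub
  have := card_le_card hsup
  have := h.card_filter_abs (· < a j)
  have := Fin.card_Ioo_lt_card_Ioc hji
  omega

end IsSignedPermOf

theorem lt_apply_of_signedPerm_of_lt {σ : Equiv.Perm (Fin r)} {ε : Fin r → ℝ}
    (ha : StrictAnti a) (hb : StrictAnti b) (hε : ∀ i, ε i = 1 ∨ ε i = -1)
    (hab : ∀ i, b i = ε i * a (σ i)) {i : Fin r} (hi : b i < a i) : b (σ i) < a (σ i) := by
  have h : IsSignedPermOf a b := ⟨σ, ε, hε, hab⟩
  rcases hε i with hεi | hεi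
  · have hbi : b i = a (σ i) := by rw [hab i, hεi, one_mul]
    have hlt : i < σ i := ha.lt_iff_gt.mp (hbi ▸ hi)
    linarith [hb hlt]
  · have hbi : b i = -a (σ i) := by rw [hab i, hεi, neg_one_mul]
    rcases lt_trichotomy i (σ i) with hlt | heq | hgt
    · exact h.lt_of_eq_neg_of_lt_of_lt ha hb hbi hi hlt
    · exact heq ▸ hi
    · exact h.lt_of_eq_neg_of_lt_of_gt ha hb hbi hi hgt

theorem IsSignedPermOf.min_of_strictAnti (ha : StrictAnti a) (hb : StrictAnti b)
    (h : IsSignedPermOf a b) : IsSignedPermOf a (fun i => min (a i) (b i)) := by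
  classical
  obtain ⟨σ, ε, hε, hab⟩ := h
  let p i := b i < a i
  let τ := Equiv.Perm.ofSubtype
    (σ.subtypePermOfFintype (p := p) fun _ => lt_apply_of_signedPerm_of_lt ha hb hε hab)
  refine ⟨τ, fun i => if b i < a i then ε i else 1, fun i => ?_, fun i => ?_⟩
  · dsimp only
    split_ifs
    exacts [hε i, Or.inl rfl]
  · dsimp only
    by_cases hi : b i < a i
    · rw [min_eq_right hi.le, if_pos hi, hab i, Equiv.Perm.ofSubtype_apply_of_mem (p := p) _ hi]
      rfl
    · rw [min_eq_left (not_lt.mp hi), if_neg hi,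
        Equiv.Perm.ofSubtype_apply_of_not_mem (p := p) _ hi, one_mul]

end

theorem stmt4_general (r : ℕ) (δ : ℤ) (lam mu : Fin r → ℝ)
    (hlam : Antitone lam) (hmu : Antitone mu)
    (h : IsSignedPermOf (fun i => lam i + (-(δ : ℝ)/2 - (i : ℕ)))
          (fun i => mu i + (-(δ : ℝ)/2 - (i : ℕ)))) :
    IsSignedPermOf (fun i => lam i + (-(δ : ℝ)/2 - (i : ℕ)))
      (fun i => min (lam i) (mu i) + (-(δ : ℝ)/2 - (i : ℕ))) := by
  have hρ : StrictAnti fun i : Fin r => -(δ : ℝ)/2 - (i : ℕ) := fun i j hij => by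
    have : ((i : ℕ) : ℝ) < (j : ℕ) := by exact_mod_cast hij
    linarith
  simpa only [min_add_add_right] using
    h.min_of_strictAnti (hlam.add_strictAnti hρ) (hmu.add_strictAnti hρ)

/-- Let `δ ∈ ℤ` and `ρ̂ = (−δ/2, −δ/2−1, …, −δ/2−(r−1))`.  If
`λ, μ ∈ ℝ^r` are weakly decreasing and conjugate under the star action of
`W(C_r)` (i.e. `μ + ρ̂ = w(λ + ρ̂)` for a signed permutation `w`), then `λ` and
the pointwise minimum `λ ∩ μ` are conjugate under the star action of `W(C_r)`. -/
theorem stmt4 (r : ℕ) (hr : 1 ≤ r) (δ : ℤ) (lam mu : Fin r → ℝ)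
    (hlam : Antitone lam) (hmu : Antitone mu)
    (h : IsSignedPermOf (fun i => lam i + (-(δ : ℝ)/2 - (i : ℕ)))
          (fun i => mu i + (-(δ : ℝ)/2 - (i : ℕ)))) :
    IsSignedPermOf (fun i => lam i + (-(δ : ℝ)/2 - (i : ℕ)))
      (fun i => min (lam i) (mu i) + (-(δ : ℝ)/2 - (i : ℕ))) :=
  stmt4_general r δ lam mu hlam hmu h
end

section
/- Let r ≥ 1 and let λ, μ ∈ ℝ^r be strictly decreasing tuples. If μ = w(λ) for some even signed permutation w (i.e., λ and μ are conjugate under the Weyl group W(D_r)), then λ ∩ μ = w'(λ) for some even signed permutation w' (i.e., λ and λ ∩ μ are conjugate under W(D_r)). -/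
/-
Two tuples are conjugate under `W(D_r)` exactly when their absolute values agree up to a
permutation and their products agree: a signed permutation with an odd number of sign changes
preserves the product only if some coordinate is zero, and flipping the sign there is free.

For `ν = λ ∩ μ` and an upper set `S ⊆ ℝ` missing `0`, the indices with `|ν i| ∈ S` are those
with `ν i ∈ S`, the intersection of the corresponding sets for `λ` and `μ`, together with those
with `-ν i ∈ S`, the union of the corresponding sets. By monotonicity both pairs are nested, and
since `λ` and `μ` have the same counts in total, the count for `ν` equals the one for `λ`.
Counting over all upper sets recovers the absolute values up to permutation. Likewise the
negative coordinates of `ν` are those of `λ` or those of `μ`, which fixes the sign of `∏ ν`.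
-/

/-- `y` is obtained from `x` by an even signed permutation, i.e. `x` and `y` are
conjugate under the Weyl group `W(D_r) ⊆ W(C_r)` of signed permutations with an
even number of sign changes (`∏ i, ε i = 1`). -/
def IsEvenSignedPermOf {r : ℕ} (x y : Fin r → ℝ) : Prop :=
  ∃ (σ : Equiv.Perm (Fin r)) (ε : Fin r → ℝ),
    (∀ i, ε i = 1 ∨ ε i = -1) ∧ (∏ i, ε i) = 1 ∧ ∀ i, y i = ε i * x (σ i)

theorem exists_sign_mul_eq_of_abs_eq {a b : ℝ} (h : |a| = |b|) :
    ∃ e : ℝ, (e = 1 ∨ e = -1) ∧ b = e * a := by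
  rcases abs_eq_abs.mp h with h | h
  · exact ⟨1, .inl rfl, by rw [h, one_mul]⟩
  · exact ⟨-1, .inr rfl, by rw [h, neg_one_mul, neg_neg]⟩

theorem isEvenSignedPermOf_iff {r : ℕ} {x y : Fin r → ℝ} :
    IsEvenSignedPermOf x y ↔
      (∃ σ : Equiv.Perm (Fin r), ∀ i, |x (σ i)| = |y i|) ∧ ∏ i, y i = ∏ i, x i := by
  constructor
  · rintro ⟨σ, ε, hε, hprod, hy⟩
    refine ⟨⟨σ, fun i => ?_⟩, ?_⟩
    · rcases hε i with h | h <;> simp [hy i, h]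
    · simp_rw [hy]
      rw [Finset.prod_mul_distrib, hprod, one_mul, Equiv.prod_comp]
  · rintro ⟨⟨σ, hσ⟩, hprod⟩
    choose ε hε hy using fun i => exists_sign_mul_eq_of_abs_eq (hσ i)
    have hprod_y : ∏ i, y i = (∏ i, ε i) * ∏ i, x i := by
      simp_rw [hy]
      rw [Finset.prod_mul_distrib, Equiv.prod_comp]
    have hε_prod : ∏ i, ε i = 1 ∨ ∏ i, ε i = -1 :=
      Finset.prod_induction _ (fun e => e = 1 ∨ e = -1)
        (fun a b ha hb => by rcases ha with rfl | rfl <;> rcases hb with rfl | rfl <;> norm_num)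
        (.inl rfl) fun i _ => hε i
    rcases hε_prod with hε_prod | hε_prod
    · exact ⟨σ, ε, hε, hε_prod, hy⟩
    obtain ⟨j, -, hj⟩ : ∃ j ∈ Finset.univ, x j = 0 :=
      Finset.prod_eq_zero_iff.mp (by rw [hε_prod] at hprod_y; linarith)
    set k := σ.symm j
    refine ⟨σ, Function.update ε k (-ε k), fun i => ?_, ?_, fun i => ?_⟩
    · rcases eq_or_ne i k with rfl | hi
      · rw [Function.update_self]; rcases hε k with h | h <;> simp [h]
      · rw [Function.update_of_ne hi]; exact hε i
    · rw [Finset.prod_update_of_mem (Finset.mem_univ k), neg_mul,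
        ← Finset.prod_eq_mul_prod_sdiff_singleton_of_mem (Finset.mem_univ k), hε_prod, neg_neg]
    · rcases eq_or_ne i k with rfl | hi
      · rw [hy, Equiv.apply_symm_apply, hj, mul_zero, mul_zero]
      · rw [Function.update_of_ne hi, hy]

open Set

theorem IsUpperSet.min_mem_iff {α : Type*} [LinearOrder α] {S : Set α} (hS : IsUpperSet S)
    {a b : α} : min a b ∈ S ↔ a ∈ S ∧ b ∈ S := by
  refine ⟨fun h => ⟨hS (min_le_left a b) h, hS (min_le_right a b) h⟩, fun ⟨ha, hb⟩ => ?_⟩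
  rcases min_choice a b with e | e <;> rwa [e]

theorem IsUpperSet.max_mem_iff {α : Type*} [LinearOrder α] {S : Set α} (hS : IsUpperSet S)
    {a b : α} : max a b ∈ S ↔ a ∈ S ∨ b ∈ S := by
  refine ⟨fun h => ?_, fun h => h.elim (hS (le_max_left a b)) (hS (le_max_right a b))⟩
  rcases max_choice a b with e | e <;> rw [e] at h <;> simp [h]

theorem IsUpperSet.abs_mem_iff {S : Set ℝ} (hS : IsUpperSet S) {a : ℝ} :
    |a| ∈ S ↔ a ∈ S ∨ -a ∈ S := by
  rw [abs_eq_max_neg, hS.max_mem_iff]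

section Counting

variable {ι : Type*} [Finite ι]

theorem exists_perm_iff_ncard_preimage_upperSet_eq {α : Type*} [LinearOrder α] {f g : ι → α} :
    (∃ σ : Equiv.Perm ι, ∀ i, g (σ i) = f i) ↔
      ∀ S : Set α, IsUpperSet S → (f ⁻¹' S).ncard = (g ⁻¹' S).ncard := by
  constructor
  · rintro ⟨σ, hσ⟩ S -
    have : f ⁻¹' S = σ ⁻¹' (g ⁻¹' S) := by ext i; simp [hσ]
    rw [this, ncard_preimage_of_injective_subset_range σ.injective (by simp)]
  · intro h
    have hfiber : ∀ a, Nat.card {i // f i = a} = Nat.card {i // g i = a} := fun a => by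
      have hsub : ∀ φ : ι → α, φ ⁻¹' Ioi a ⊆ φ ⁻¹' Ici a := fun φ =>
        preimage_mono Ioi_subset_Ici_self
      have key := congrArg₂ (· - ·) (h _ (isUpperSet_Ici a)) (h _ (isUpperSet_Ioi a))
      simp only [← ncard_sdiff (hsub _), ← preimage_sdiff, Ici_sdiff_Ioi, Icc_self] at key
      exact key
    exact ⟨Equiv.ofFiberEquiv fun a => (Finite.card_eq.mp (hfiber a)).some,
      Equiv.ofFiberEquiv_map _⟩

theorem ncard_inter_eq_min_of_total {s t : Set ι} (h : s ⊆ t ∨ t ⊆ s) :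
    (s ∩ t).ncard = min s.ncard t.ncard := by
  rcases h with h | h
  · rw [inter_eq_left.mpr h, min_eq_left (ncard_le_ncard h)]
  · rw [inter_eq_right.mpr h, min_eq_right (ncard_le_ncard h)]

theorem ncard_union_eq_max_of_total {s t : Set ι} (h : s ⊆ t ∨ t ⊆ s) :
    (s ∪ t).ncard = max s.ncard t.ncard := by
  rcases h with h | h
  · rw [union_eq_right.mpr h, max_eq_right (ncard_le_ncard h)]
  · rw [union_eq_left.mpr h, max_eq_left (ncard_le_ncard h)]

theorem ncard_abs_mem_eq_add {S : Set ℝ} (hS : IsUpperSet S) (h0 : (0 : ℝ) ∉ S)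
    (x : ι → ℝ) :
    {i | |x i| ∈ S}.ncard = {i | x i ∈ S}.ncard + {i | -x i ∈ S}.ncard := by
  rw [← ncard_union_eq]
  · simp only [hS.abs_mem_iff, ofPred_or]
  · refine disjoint_left.mpr fun i hpos hneg => h0 ?_
    rcases le_total (x i) 0 with h | h
    · exact hS h hpos
    · exact hS (neg_nonpos.mpr h) hneg

variable [LinearOrder ι] {x y : ι → ℝ}

theorem ncard_abs_min_mem_of_antitone (hx : Antitone x) (hy : Antitone y) {S : Set ℝ}
    (hS : IsUpperSet S) (hxy : {i | |y i| ∈ S}.ncard = {i | |x i| ∈ S}.ncard) :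
    {i | |min (x i) (y i)| ∈ S}.ncard = {i | |x i| ∈ S}.ncard := by
  by_cases h0 : (0 : ℝ) ∈ S
  · have hall : ∀ a : ℝ, |a| ∈ S := fun a => hS (abs_nonneg a) h0
    simp only [hall, ofPred_true]
  have hpos : {i | x i ∈ S} ⊆ {i | y i ∈ S} ∨ {i | y i ∈ S} ⊆ {i | x i ∈ S} :=
    IsLowerSet.total (fun i j hji hi => hS (hx hji) hi) (fun i j hji hi => hS (hy hji) hi)
  have hneg : {i | -x i ∈ S} ⊆ {i | -y i ∈ S} ∨ {i | -y i ∈ S} ⊆ {i | -x i ∈ S} :=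
    IsUpperSet.total (fun i j hij hi => hS (neg_le_neg (hx hij)) hi)
      (fun i j hij hi => hS (neg_le_neg (hy hij)) hi)
  have hmin : {i | min (x i) (y i) ∈ S} = {i | x i ∈ S} ∩ {i | y i ∈ S} := by
    ext i; exact hS.min_mem_iff
  have hmax : {i | -min (x i) (y i) ∈ S} = {i | -x i ∈ S} ∪ {i | -y i ∈ S} := by
    ext i; simp only [mem_ofPred_eq, mem_union, neg_inf, hS.max_mem_iff]
  rw [ncard_abs_mem_eq_add hS h0 x, ncard_abs_mem_eq_add hS h0 y] at hxy
  rw [ncard_abs_mem_eq_add hS h0 x, ncard_abs_mem_eq_add hS h0 fun i => min (x i) (y i), hmin,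
    hmax, ncard_inter_eq_min_of_total hpos, ncard_union_eq_max_of_total hneg]
  omega

end Counting

section Products

variable {ι : Type*} [Fintype ι]

theorem prod_eq_neg_one_pow_mul_prod_abs (x : ι → ℝ) :
    ∏ i, x i = (-1) ^ {i | x i < 0}.ncard * ∏ i, |x i| := by
  classical
  have hsign : ∀ i, x i = (if x i < 0 then -1 else 1) * |x i| := fun i => by
    split_ifs with h
    · rw [abs_of_neg h, neg_one_mul, neg_neg]
    · rw [abs_of_nonneg (not_lt.mp h), one_mul]
  rw [Finset.prod_congr rfl fun i _ => hsign i, Finset.prod_mul_distrib, Finset.prod_ite,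
    Finset.prod_const, Finset.prod_const_one, mul_one, ncard_eq_toFinset_card', toFinset_ofPred]

variable [LinearOrder ι] {x y : ι → ℝ}

theorem prod_min_eq_of_antitone (hx : Antitone x) (hy : Antitone y)
    (hprod : ∏ i, y i = ∏ i, x i) (habs : ∏ i, |min (x i) (y i)| = ∏ i, |x i|) :
    ∏ i, min (x i) (y i) = ∏ i, x i := by
  have hneg : {i | min (x i) (y i) < 0} = {i | x i < 0} ∪ {i | y i < 0} := by
    ext i; simp only [mem_ofPred_eq, mem_union, min_lt_iff]
  have habs_y : ∏ i, |y i| = ∏ i, |x i| := by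
    rw [← Finset.abs_prod, hprod, Finset.abs_prod]
  have htotal : {i | x i < 0} ⊆ {i | y i < 0} ∨ {i | y i < 0} ⊆ {i | x i < 0} :=
    IsUpperSet.total (fun i j hij hi => (hx hij).trans_lt hi)
      (fun i j hij hi => (hy hij).trans_lt hi)
  rw [prod_eq_neg_one_pow_mul_prod_abs, hneg, habs]
  rcases htotal with h | h
  · rw [union_eq_right.mpr h, ← habs_y, ← prod_eq_neg_one_pow_mul_prod_abs, hprod]
  · rw [union_eq_left.mpr h, ← prod_eq_neg_one_pow_mul_prod_abs]

end Products

theorem stmt5_general (r : ℕ) (lam mu : Fin r → ℝ)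
    (hlam : StrictAnti lam) (hmu : StrictAnti mu)
    (h : IsEvenSignedPermOf lam mu) :
    IsEvenSignedPermOf lam (fun i => min (lam i) (mu i)) := by
  obtain ⟨habs_mu, hprod⟩ := isEvenSignedPermOf_iff.mp h
  obtain ⟨τ, hτ⟩ : ∃ τ : Equiv.Perm (Fin r), ∀ i, |lam (τ i)| = |min (lam i) (mu i)| :=
    exists_perm_iff_ncard_preimage_upperSet_eq.mpr fun S hS =>
      ncard_abs_min_mem_of_antitone hlam.antitone hmu.antitone hS
        (exists_perm_iff_ncard_preimage_upperSet_eq.mp habs_mu S hS)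
  refine isEvenSignedPermOf_iff.mpr ⟨⟨τ, hτ⟩, ?_⟩
  exact prod_min_eq_of_antitone hlam.antitone hmu.antitone hprod
    (Fintype.prod_equiv τ _ _ fun i => (hτ i).symm)

/-- If `λ, μ ∈ ℝ^r` are strictly decreasing and conjugate under the
Weyl group `W(D_r)` of even signed permutations, then `λ` and the pointwise
minimum `λ ∩ μ` are conjugate under `W(D_r)`. -/
theorem stmt5 (r : ℕ) (hr : 1 ≤ r) (lam mu : Fin r → ℝ)
    (hlam : StrictAnti lam) (hmu : StrictAnti mu)
    (h : IsEvenSignedPermOf lam mu) :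
    IsEvenSignedPermOf lam (fun i => min (lam i) (mu i)) :=
  stmt5_general r lam mu hlam hmu h
end

section
/- Let p, m, r be positive integers with 2r < p and m > r. Let λ be a partition with at most r parts, each part at most r, regarded as an element of ℤ^m by appending zeros, and set ρ = (m, m−1, …, 1) ∈ ℤ^m. Let 1 ≤ i < j ≤ m and let a, l be positive integers with (λ+ρ)_i − (λ+ρ)_j = a + l·p. Then the vector λ + ρ − a·(ε_i − ε_j) has two equal entries, i.e., there exist indices k ≠ k' in {1,…,m} at which its entries coincide. (This expresses the vanishing χ₀(s_{α,l}·λ) = 0 of the corresponding type-C Weyl character in the Jantzen sum formula.) -/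
/-- Lemma on roots `ε_i − ε_j` in the Jantzen sum formula for
`Sp_{2m}`: let `p, m, r` be positive integers with `2r < p` and `m > r`, let
`λ` be a partition with at most `r` parts, each part at most `r`, regarded as an
element of `ℤ^m` (0-indexed; appended zeros), and let `ρ = (m, m−1, …, 1)`, so
`ρ_i = m − i` in 0-indexed form.  If `1 ≤ i < j ≤ m` and `a, l > 0` satisfy
`(λ+ρ)_i − (λ+ρ)_j = a + l p`, then the vector `λ + ρ − a(ε_i − ε_j)` has two
equal entries (so the corresponding Weyl character `χ₀(s_{α,l}·λ)` vanishes). -/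
theorem stmt7 (p m r : ℕ) (hp : 0 < p) (hm : 0 < m) (hr : 0 < r)
    (h2r : 2 * r < p) (hmr : r < m)
    (lam : Fin m → ℤ) (hanti : Antitone lam) (hnonneg : ∀ i, 0 ≤ lam i)
    (hparts : ∀ i, lam i ≤ (r : ℤ)) (hzero : ∀ i : Fin m, r ≤ (i : ℕ) → lam i = 0)
    (i j : Fin m) (hij : i < j) (a l : ℤ) (ha : 0 < a) (hl : 0 < l)
    (heq : (lam i + ((m : ℤ) - (i : ℕ))) - (lam j + ((m : ℤ) - (j : ℕ)))
            = a + l * p) :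
    ∃ k k' : Fin m, k ≠ k' ∧
      (lam k + ((m : ℤ) - (k : ℕ)) - (if k = i then a else 0)
        + (if k = j then a else 0))
      = (lam k' + ((m : ℤ) - (k' : ℕ)) - (if k' = i then a else 0)
        + (if k' = j then a else 0)) := by
  -- N = new value at position j
  set N : ℤ := lam j + ((m : ℤ) - (j : ℕ)) + a with hN
  have hlp : (p : ℤ) ≤ l * p := by
    nlinarith [hl, hp.le]
  have hNle : N ≤ (m : ℤ) - (i : ℕ) - r - 1 := by
    have h1 : lam i ≤ (r : ℤ) := hparts i
    have h2 : (2 * r : ℤ) < p := by exact_mod_cast h2r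
    omega
  have hNge : (m : ℤ) - (j : ℕ) + 1 ≤ N := by
    have := hnonneg j; omega
  have hjm : (j : ℕ) < m := j.isLt
  -- the index t with m - t = N
  have hit : (i : ℤ) + (r : ℤ) + 1 ≤ (m : ℤ) - N := by omega
  have htj : (m : ℤ) - N ≤ (j : ℤ) - 1 := by omega
  set t : ℕ := ((m : ℤ) - N).toNat with ht
  have htz : (t : ℤ) = (m : ℤ) - N := by
    rw [ht, Int.toNat_of_nonneg]; omega
  have htm : t < m := by omega
  refine ⟨j, ⟨t, htm⟩, ?_, ?_⟩
  · intro h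
    have : (j : ℕ) = t := by simpa using congrArg (Fin.val) h
    omega
  · have hk0 : lam ⟨t, htm⟩ = 0 := hzero _ (by simp; omega)
    have hji : j ≠ i := by intro h; exact absurd h.symm (Fin.ne_of_lt hij)
    have hti : (⟨t, htm⟩ : Fin m) ≠ i := by
      intro h
      have : t = (i : ℕ) := by simpa using congrArg (Fin.val) h
      omega
    have htj' : (⟨t, htm⟩ : Fin m) ≠ j := by
      intro h
      have : t = (j : ℕ) := by simpa using congrArg (Fin.val) h
      omega
    rw [if_neg hji, if_pos rfl, if_neg hti, if_neg htj', hk0]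
    simp only [Fin.val_mk]
    omega
end

section
/- Let p, m, r be positive integers with 2r < p and m > r. Let λ be a partition with at most r parts, each part at most r, regarded as an element of ℤ^m by appending zeros, and set ρ = (m, m−1, …, 1) ∈ ℤ^m. Let S₁ be the set of triples (i, j, l) with 1 ≤ i < j ≤ m, j > r and l ≥ 1 an integer, such that a := (λ+ρ)_i + (λ+ρ)_j − l·p > 0 and the entries of λ + ρ − a·(ε_i + ε_j) are all nonzero with pairwise distinct absolute values. Let S₂ be the set of pairs (k, l) with 1 ≤ k ≤ m and l ≥ 1 an integer, such that b := (λ+ρ)_k − l·p > 0 and the entries of λ + ρ − 2b·ε_k are all nonzero with pairwise distinct absolute values. Then the map (i, j, l) ↦ (i, l) is a bijection from S₁ onto S₂, and for every (i, j, l) ∈ S₁, writing a = (λ+ρ)_i + (λ+ρ)_j − l·p and b = (λ+ρ)_i − l·p, the vector λ + ρ − a·(ε_i + ε_j) is obtained from the vector λ + ρ − 2b·ε_i by changing the sign of the j-th entry (all other entries being equal). -/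
namespace Stmt8

/-- `ρ = (m, m−1, …, 1)` in 0-indexed form: `ρ_k = m − k`. -/
def rho (m : ℕ) (k : Fin m) : ℤ := (m : ℤ) - (k : ℕ)

/-- The entries of `v` are all nonzero and have pairwise distinct absolute
values (the combinatorial criterion for nonvanishing of the type `C_m` Weyl
character `χ₀(v − ρ)`). -/
def DistinctAbsNonzero {m : ℕ} (v : Fin m → ℤ) : Prop :=
  (∀ k, v k ≠ 0) ∧ ∀ k k', k ≠ k' → |v k| ≠ |v k'|

/-- The vector `λ + ρ − a(ε_i + ε_j)`. -/
def vRoot {m : ℕ} (lam : Fin m → ℤ) (i j : Fin m) (a : ℤ) : Fin m → ℤ :=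
  fun k => lam k + rho m k - (if k = i then a else 0) - (if k = j then a else 0)

/-- The vector `λ + ρ − 2b·ε_k`. -/
def wRoot {m : ℕ} (lam : Fin m → ℤ) (i : Fin m) (b : ℤ) : Fin m → ℤ :=
  fun k => lam k + rho m k - (if k = i then 2 * b else 0)

/-- The set `S₁` of triples `(i, j, l)` with `i < j`, `j > r` (1-indexed, i.e.
`j ≥ r` 0-indexed), `l ≥ 1`, `a := (λ+ρ)_i + (λ+ρ)_j − l p > 0` and
`λ + ρ − a(ε_i + ε_j)` has nonzero entries with pairwise distinct absolute
values. -/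
def S1 (m r p : ℕ) (lam : Fin m → ℤ) : Set (Fin m × Fin m × ℤ) :=
  {x | x.1 < x.2.1 ∧ r ≤ (x.2.1 : ℕ) ∧ 1 ≤ x.2.2 ∧
    0 < lam x.1 + rho m x.1 + lam x.2.1 + rho m x.2.1 - x.2.2 * p ∧
    DistinctAbsNonzero (vRoot lam x.1 x.2.1
      (lam x.1 + rho m x.1 + lam x.2.1 + rho m x.2.1 - x.2.2 * p))}

/-- The set `S₂` of pairs `(k, l)` with `l ≥ 1`, `b := (λ+ρ)_k − l p > 0` and
`λ + ρ − 2b·ε_k` has nonzero entries with pairwise distinct absolute values. -/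
def S2 (m p : ℕ) (lam : Fin m → ℤ) : Set (Fin m × ℤ) :=
  {x | 1 ≤ x.2 ∧ 0 < lam x.1 + rho m x.1 - x.2 * p ∧
    DistinctAbsNonzero (wRoot lam x.1 (lam x.1 + rho m x.1 - x.2 * p))}

end Stmt8

namespace Stmt8Aux
open Stmt8

/-- Index hitting a prescribed small positive value of `ρ`. -/
lemma hit (m r : ℕ) (t : ℤ) (h1 : 1 ≤ t) (h2 : t ≤ (m : ℤ) - r - 1) :
    ∃ k : Fin m, r < (k : ℕ) ∧ (m : ℤ) - ((k : ℕ) : ℤ) = t := by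
  refine ⟨⟨m - t.toNat, by omega⟩, ?_, ?_⟩ <;> simp <;> omega

lemma dan_iff {m : ℕ} {v w : Fin m → ℤ} (h : ∀ k, |v k| = |w k|) :
    DistinctAbsNonzero v ↔ DistinctAbsNonzero w := by
  have h0 : ∀ k, v k = 0 ↔ w k = 0 := fun k => by
    rw [← abs_eq_zero, ← abs_eq_zero (a := w k), h k]
  constructor <;> rintro ⟨h1, h2⟩
  · exact ⟨fun k hw => h1 k ((h0 k).mpr hw),
      fun k k' hkk => by rw [← h k, ← h k']; exact h2 k k' hkk⟩
  · exact ⟨fun k hv => h1 k ((h0 k).mp hv),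
      fun k k' hkk => by rw [h k, h k']; exact h2 k k' hkk⟩

lemma point {m : ℕ} (lam : Fin m → ℤ) (i j : Fin m) (hji : j ≠ i) (b : ℤ)
    (hbj : lam j + rho m j = b) (k : Fin m) :
    vRoot lam i j (2 * b) k = if k = j then -(wRoot lam i b k) else wRoot lam i b k := by
  unfold vRoot wRoot
  by_cases hkj : k = j
  · subst hkj
    simp only [if_neg hji, eq_self_iff_true, if_true, sub_zero]
    linarith
  · rw [if_neg hkj, if_neg hkj]
    ring

lemma abs_point {m : ℕ} (lam : Fin m → ℤ) (i j : Fin m) (hji : j ≠ i) (b : ℤ)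
    (hbj : lam j + rho m j = b) (k : Fin m) :
    |vRoot lam i j (2 * b) k| = |wRoot lam i b k| := by
  rw [point lam i j hji b hbj k]
  split <;> simp

/-- The key forcing lemma: membership of `(i, j, l)` in `S₁` forces
`(λ+ρ)_i − l·p = ρ_j`. -/
lemma key {p m r : ℕ} (hr : 0 < r) (h2r : 2 * r < p)
    {lam : Fin m → ℤ} (hparts : ∀ i, lam i ≤ (r : ℤ))
    (hzero : ∀ i : Fin m, r ≤ (i : ℕ) → lam i = 0)
    {i j : Fin m} {l : ℤ} (h : (i, j, l) ∈ S1 m r p lam) :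
    lam i + rho m i - l * p = rho m j := by
  obtain ⟨hij, hjr, hl, ha, hdan⟩ := h
  have hij' : (i : ℕ) < (j : ℕ) := hij
  have hji : j ≠ i := (ne_of_lt hij).symm
  have hlamj : lam j = 0 := hzero j hjr
  have hp' : (0 : ℤ) ≤ p := Int.natCast_nonneg p
  have hP : 2 * (r : ℤ) < l * p := by
    have h1 : (2 * r : ℤ) < p := by exact_mod_cast h2r
    nlinarith
  have hrhoi : rho m i = (m : ℤ) - (i : ℕ) := rfl
  have hrhoj : rho m j = (m : ℤ) - (j : ℕ) := rfl
  have hjm : ((j : ℕ) : ℤ) < m := by exact_mod_cast j.isLt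
  have him0 : (0 : ℤ) ≤ ((i : ℕ) : ℤ) := Int.natCast_nonneg _
  have hjr' : (r : ℤ) ≤ ((j : ℕ) : ℤ) := by exact_mod_cast hjr
  set A := lam i + rho m i + lam j + rho m j - l * p with hA
  have hvj : vRoot lam i j A j = l * p - (lam i + rho m i) := by
    simp only [vRoot, if_neg hji, eq_self_iff_true, if_true, sub_zero]
    rw [hA]
    ring
  have hvk : ∀ k : Fin m, k ≠ i → k ≠ j → vRoot lam i j A k = lam k + rho m k :=
    fun k h1 h2 => by simp only [vRoot, if_neg h1, if_neg h2]; ring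
  have hbne : l * p - (lam i + rho m i) ≠ 0 := hvj ▸ hdan.1 j
  rcases lt_or_gt_of_ne hbne with hneg | hpos
  · -- b = (λ+ρ)_i − l·p > 0; show b = ρ_j
    set t := lam i + rho m i - l * p with ht
    have ht1 : 1 ≤ t := by omega
    have ht2 : t ≤ (m : ℤ) - r - 1 := by
      have := hparts i
      rw [ht, hrhoi]; linarith
    obtain ⟨k, hkr, hk⟩ := hit m r t ht1 ht2
    have hlamk : lam k = 0 := hzero k (le_of_lt hkr)
    have hrhok : rho m k = (m : ℤ) - (k : ℕ) := rfl
    by_contra hne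
    have hkj : k ≠ j := by
      intro e
      apply hne
      rw [hrhoj, show ((j : ℕ) : ℤ) = ((k : ℕ) : ℤ) from by rw [e]]
      linarith [hk]
    have hki : k ≠ i := by
      intro e
      subst e
      rw [hlamk, hrhok] at ht
      omega
    have hd := hdan.2 j k hkj.symm
    apply hd
    rw [hvj, hvk k hki hkj, hlamk, hrhok, hk, abs_of_neg hneg]
    rw [abs_of_pos (by omega)]
    omega
  · -- l·p − (λ+ρ)_i > 0: contradiction with distinctness
    exfalso
    set t := l * p - (lam i + rho m i) with ht
    have haj : t < (m : ℤ) - (j : ℕ) := by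
      rw [hA, hlamj, hrhoj] at ha; omega
    have ht2 : t ≤ (m : ℤ) - r - 1 := by omega
    obtain ⟨k, hkr, hk⟩ := hit m r t (by omega) ht2
    have hjk : (j : ℕ) < (k : ℕ) := by
      have : ((j : ℕ) : ℤ) < ((k : ℕ) : ℤ) := by omega
      exact_mod_cast this
    have hkj : k ≠ j := Fin.ne_of_val_ne (by omega)
    have hki : k ≠ i := Fin.ne_of_val_ne (by omega)
    have hlamk : lam k = 0 := hzero k (by omega)
    have hrhok : rho m k = (m : ℤ) - (k : ℕ) := rfl
    apply hdan.2 j k hkj.symm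
    rw [hvj, hvk k hki hkj, hlamk, hrhok, hk, abs_of_pos hpos, abs_of_pos (by omega)]
    omega

end Stmt8Aux


open Stmt8 in
/-- Lemma matching the roots `ε_i + ε_j` (`j > r`) with the roots
`2ε_i` in the Jantzen sum formula: `(i, j, l) ↦ (i, l)` is a bijection from
`S₁` onto `S₂`, and for `(i, j, l) ∈ S₁`, with `a = (λ+ρ)_i + (λ+ρ)_j − l p`
and `b = (λ+ρ)_i − l p`, the vector `λ + ρ − a(ε_i + ε_j)` is obtained from
`λ + ρ − 2b·ε_i` by changing the sign of the `j`-th entry. -/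
theorem stmt8 (p m r : ℕ) (hp : 0 < p) (hm : 0 < m) (hr : 0 < r)
    (h2r : 2 * r < p) (hmr : r < m)
    (lam : Fin m → ℤ) (hanti : Antitone lam) (hnonneg : ∀ i, 0 ≤ lam i)
    (hparts : ∀ i, lam i ≤ (r : ℤ)) (hzero : ∀ i : Fin m, r ≤ (i : ℕ) → lam i = 0) :
    Set.BijOn (fun x : Fin m × Fin m × ℤ => (x.1, x.2.2)) (S1 m r p lam) (S2 m p lam) ∧
    ∀ i j : Fin m, ∀ l : ℤ, (i, j, l) ∈ S1 m r p lam →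
      ∀ k : Fin m,
        vRoot lam i j (lam i + rho m i + lam j + rho m j - l * p) k
          = if k = j then -(wRoot lam i (lam i + rho m i - l * p) k)
            else wRoot lam i (lam i + rho m i - l * p) k := by
  have hp' : (0 : ℤ) ≤ p := Int.natCast_nonneg p
  constructor
  · refine ⟨?_, ?_, ?_⟩
    · -- MapsTo
      rintro ⟨i, j, l⟩ hx
      have hb := Stmt8Aux.key hr h2r hparts hzero hx
      obtain ⟨hij, hjr, hl, ha, hdan⟩ := hx
      have hji : j ≠ i := (ne_of_lt hij).symm
      have hlamj : lam j = 0 := hzero j hjr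
      have hbj : lam j + rho m j = lam i + rho m i - l * p := by
        rw [hlamj, zero_add, hb]
      have hjm : ((j : ℕ) : ℤ) < m := by exact_mod_cast j.isLt
      have hrhoj : rho m j = (m : ℤ) - (j : ℕ) := rfl
      refine ⟨hl, ?_, ?_⟩
      · rw [hb, hrhoj]; omega
      · have hA2 : lam i + rho m i + lam j + rho m j - l * p
            = 2 * (lam i + rho m i - l * p) := by linarith [hbj]
        rw [hA2] at hdan
        exact (Stmt8Aux.dan_iff (Stmt8Aux.abs_point lam i j hji _ hbj)).mp hdan
    · -- InjOn
      rintro ⟨i1, j1, l1⟩ hx ⟨i2, j2, l2⟩ hy hxy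
      simp only [Prod.mk.injEq] at hxy
      obtain ⟨hi, hl⟩ := hxy
      subst hi; subst hl
      have h1 := Stmt8Aux.key hr h2r hparts hzero hx
      have h2 := Stmt8Aux.key hr h2r hparts hzero hy
      have hrr : rho m j1 = rho m j2 := by rw [← h1, ← h2]
      have e1 : rho m j1 = (m : ℤ) - (j1 : ℕ) := rfl
      have e2 : rho m j2 = (m : ℤ) - (j2 : ℕ) := rfl
      have hj : (j1 : ℕ) = (j2 : ℕ) := by omega
      exact Prod.ext rfl (Prod.ext (Fin.ext hj) rfl)
    · -- SurjOn
      rintro ⟨i, l⟩ hy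
      obtain ⟨hl, hpos, hdan⟩ := hy
      have hP : 2 * (r : ℤ) < l * p := by
        have h1 : (2 * r : ℤ) < p := by exact_mod_cast h2r
        nlinarith
      have hrhoi : rho m i = (m : ℤ) - (i : ℕ) := rfl
      have him0 : (0 : ℤ) ≤ ((i : ℕ) : ℤ) := Int.natCast_nonneg _
      have hb2 : lam i + rho m i - l * p ≤ (m : ℤ) - r - 1 := by
        have := hparts i; linarith [hrhoi.le, hrhoi.ge]
      obtain ⟨j, hjr', hj⟩ := Stmt8Aux.hit m r (lam i + rho m i - l * p)
        (by linarith) hb2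
      have hij' : (i : ℕ) < (j : ℕ) := by
        have hpi := hparts i
        have : ((i : ℕ) : ℤ) < ((j : ℕ) : ℤ) := by
          have hri : (1 : ℤ) ≤ r := by exact_mod_cast hr
          linarith [hrhoi.le, hrhoi.ge]
        exact_mod_cast this
      have hijF : i < j := hij'
      have hji : j ≠ i := (ne_of_lt hijF).symm
      have hlamj : lam j = 0 := hzero j (le_of_lt hjr')
      have hrhoj : rho m j = (m : ℤ) - (j : ℕ) := rfl
      have hbj : lam j + rho m j = lam i + rho m i - l * p := by
        rw [hlamj, zero_add, hrhoj]; exact hj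
      have hA2 : lam i + rho m i + lam j + rho m j - l * p
          = 2 * (lam i + rho m i - l * p) := by linarith [hbj]
      refine ⟨(i, j, l), ⟨hijF, le_of_lt hjr', hl, ?_, ?_⟩, rfl⟩
      · rw [hA2]; linarith
      · rw [hA2]
        exact (Stmt8Aux.dan_iff (Stmt8Aux.abs_point lam i j hji _ hbj)).mpr hdan
  · intro i j l h k
    have hb := Stmt8Aux.key hr h2r hparts hzero h
    have hji : j ≠ i := (ne_of_lt h.1).symm
    have hlamj : lam j = 0 := hzero j h.2.1
    have hbj : lam j + rho m j = lam i + rho m i - l * p := by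
      rw [hlamj, zero_add, hb]
    rw [show lam i + rho m i + lam j + rho m j - l * p
        = 2 * (lam i + rho m i - l * p) from by linarith [hbj]]
    exact Stmt8Aux.point lam i j hji _ hbj k
end

section
/- Let p be a prime with p > 2, let m, r ≥ 1 be integers, set n = 2m, let u be the unique integer with −p/2 < n − up < p/2, and set δ = −(n − up). Assume u ≠ 0 and |δ| + 2r < p/2 (these assumptions force m > r). Let λ be a partition with at most r parts, each part at most r, regarded as an element of ℤ^m by appending zeros, and set ρ = (m, m−1, …, 1) ∈ ℤ^m. Let 1 ≤ i < j ≤ r and let a, l be positive integers with (λ+ρ)_i + (λ+ρ)_j = a + l·p. If the entries of the vector v = λ + ρ − a·(ε_i + ε_j) are all nonzero and have pairwise distinct absolute values, then l = u and all entries of v are strictly positive (and pairwise distinct). -/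
/-- Lemma on roots `ε_i + ε_j`, `i < j ≤ r`, in the Jantzen sum
formula for `Sp_{2m}`: let `p > 2` be prime, `m, r ≥ 1`, `n = 2m`, let `u` be
the unique integer with `−p/2 < n − up < p/2` and `δ = −(n − up)`.  Assume
`u ≠ 0` and `|δ| + 2r < p/2`.  Let `λ` be a partition with at most `r` parts,
each at most `r`, regarded in `ℤ^m` (0-indexed, `ρ_k = m − k`).  If
`1 ≤ i < j ≤ r` and `a, l > 0` satisfy `(λ+ρ)_i + (λ+ρ)_j = a + l p`, and the
entries of `v = λ + ρ − a(ε_i + ε_j)` are all nonzero with pairwise distinct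
absolute values, then `l = u` and all entries of `v` are strictly positive and
pairwise distinct. -/
theorem stmt9 (p : ℕ) (hp : p.Prime) (hp2 : 2 < p) (m r : ℕ) (hm : 1 ≤ m) (hr : 1 ≤ r)
    (u : ℤ) (hu1 : -(p : ℤ) < 2 * (2 * (m : ℤ) - u * p))
    (hu2 : 2 * (2 * (m : ℤ) - u * p) < p)
    (hu0 : u ≠ 0)
    (hdelta : 2 * (|(-(2 * (m : ℤ) - u * p))| + 2 * r) < p)
    (lam : Fin m → ℤ) (hanti : Antitone lam) (hnonneg : ∀ i, 0 ≤ lam i)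
    (hparts : ∀ i, lam i ≤ (r : ℤ)) (hzero : ∀ i : Fin m, r ≤ (i : ℕ) → lam i = 0)
    (i j : Fin m) (hij : i < j) (hjr : (j : ℕ) < r)
    (a l : ℤ) (ha : 0 < a) (hl : 0 < l)
    (heq : (lam i + ((m : ℤ) - (i : ℕ))) + (lam j + ((m : ℤ) - (j : ℕ)))
            = a + l * p)
    (v : Fin m → ℤ)
    (hv : v = fun k => lam k + ((m : ℤ) - (k : ℕ))
        - (if k = i then a else 0) - (if k = j then a else 0))
    (hnz : ∀ k, v k ≠ 0)
    (habs : ∀ k k', k ≠ k' → |v k| ≠ |v k'|) :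
    l = u ∧ (∀ k, 0 < v k) ∧ Function.Injective v := by
  have hij' : (i : ℕ) < (j : ℕ) := hij
  have hi' : (i : ℕ) < m := i.isLt
  have hj' : (j : ℕ) < m := j.isLt
  have hP0 : (0:ℤ) < (p:ℤ) := by exact_mod_cast hp.pos
  set δ : ℤ := u * p - 2 * m with hδdef
  have habsδ : 2 * (|δ| + 2 * (r:ℤ)) < (p:ℤ) := by
    have h : -(2 * (m : ℤ) - u * p) = δ := by rw [hδdef]; ring
    rwa [h] at hdelta
  have hd1 : δ ≤ |δ| := le_abs_self δ
  have hd2 : -δ ≤ |δ| := neg_le_abs δ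
  have habs0 : (0:ℤ) ≤ |δ| := abs_nonneg δ
  have hm1 : (1:ℤ) ≤ m := by exact_mod_cast hm
  have hr1 : (1:ℤ) ≤ r := by exact_mod_cast hr
  have hI0 : (0:ℤ) ≤ ((i:ℕ):ℤ) := Int.natCast_nonneg _
  have hJ0 : (0:ℤ) ≤ ((j:ℕ):ℤ) := Int.natCast_nonneg _
  have hIr : ((i:ℕ):ℤ) ≤ (r:ℤ) - 2 := by
    have h0 : (i:ℕ) + 2 ≤ r := by omega
    have h2 : ((i:ℕ):ℤ) + 2 ≤ (r:ℤ) := by exact_mod_cast h0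
    linarith
  have hJr : ((j:ℕ):ℤ) ≤ (r:ℤ) - 1 := by
    have : (j:ℕ) + 1 ≤ r := by omega
    have h2 : ((j:ℕ):ℤ) + 1 ≤ (r:ℤ) := by exact_mod_cast this
    linarith
  have hu1' : 1 ≤ u := by
    rcases lt_or_ge u 0 with h | h
    · exfalso
      have h1 : u ≤ -1 := by omega
      have h2 : u * p ≤ -1 * p := mul_le_mul_of_nonneg_right h1 hP0.le
      have h3 : -δ ≤ |δ| := hd2
      nlinarith
    · omega
  have huP : u * (p:ℤ) = 2 * m + δ := by rw [hδdef]; ring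
  have huPge : (p:ℤ) ≤ u * p := le_mul_of_one_le_left hP0.le hu1'
  have hvi : v i = lam i + ((m:ℤ) - (i:ℕ)) - a := by
    rw [hv]; simp [hij.ne]
  have hvj : v j = lam j + ((m:ℤ) - (j:ℕ)) - a := by
    rw [hv]; simp [hij.ne']
  have hvk : ∀ k, k ≠ i → k ≠ j → v k = lam k + ((m:ℤ) - (k:ℕ)) := by
    intro k h1 h2; rw [hv]; simp [h1, h2]
  -- l ≤ u
  have hl_le : l ≤ u := by
    by_contra h
    push_neg at h
    have h1 : u + 1 ≤ l := by omega
    have h2 : (u + 1) * p ≤ l * p := mul_le_mul_of_nonneg_right h1 hP0.le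
    have h2' : u * p + p ≤ l * p := by linarith [(by ring : (u + 1) * (p:ℤ) = u * p + p)]
    have h3 := hparts i
    have h4 := hparts j
    linarith
  -- l = u
  have hlu : l = u := by
    by_contra hne
    have hl1 : l ≤ u - 1 := by omega
    have hlP : l * p ≤ (u - 1) * p := mul_le_mul_of_nonneg_right (by omega) hP0.le
    have hlP2 : (p:ℤ) ≤ l * p := le_mul_of_one_le_left hP0.le hl
    have hzval : v j = l * p - lam i - ((m:ℤ) - (i:ℕ)) := by
      rw [hvj]; linarith
    have hz0 : v j ≠ 0 := hnz j
    have hub : v j ≤ (m:ℤ) - r := by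
      have hexp : (u - 1) * (p:ℤ) = u * p - p := by ring
      linarith [hnonneg i]
    have hlb : -(v j) ≤ (m:ℤ) - r := by
      linarith [hparts i]
    have habsb : |v j| ≤ (m:ℤ) - r := abs_le.mpr ⟨by linarith, hub⟩
    have habs1 : (1:ℤ) ≤ |v j| := Int.one_le_abs hz0
    have hbZ : (((v j).natAbs : ℕ) : ℤ) = |v j| := Int.natCast_natAbs _
    have hb1 : 1 ≤ (v j).natAbs := by
      have : (1:ℤ) ≤ ((v j).natAbs : ℤ) := by rw [hbZ]; exact habs1
      exact_mod_cast this
    have hbm : (v j).natAbs + r ≤ m := by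
      have : ((v j).natAbs : ℤ) + r ≤ (m:ℤ) := by rw [hbZ]; linarith
      exact_mod_cast this
    set b := (v j).natAbs with hbdef
    have hk'lt : m - b < m := by omega
    set k' : Fin m := ⟨m - b, hk'lt⟩ with hk'def
    have hk'v : (k' : ℕ) = m - b := rfl
    have hk'r : r ≤ (k' : ℕ) := by rw [hk'v]; omega
    have hk'j : k' ≠ j := Fin.ne_of_val_ne (by rw [hk'v]; omega)
    have hk'i : k' ≠ i := Fin.ne_of_val_ne (by rw [hk'v]; omega)
    have hcast : ((m - b : ℕ) : ℤ) = (m:ℤ) - (b:ℤ) := by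
      have : b ≤ m := by omega
      exact_mod_cast Int.ofNat_sub this
    have hvkval : v k' = |v j| := by
      rw [hvk k' hk'i hk'j, hzero k' hk'r, hk'v, hcast, ← hbZ]
      ring
    exact habs k' j hk'j (by rw [hvkval, abs_abs])
  subst hlu
  have haval : a = lam i + lam j - (i:ℕ) - (j:ℕ) - δ := by linarith
  have hmδ : 2 * (r:ℤ) < (m:ℤ) + δ := by linarith
  refine ⟨rfl, ?_, ?_⟩
  · intro k
    rcases eq_or_ne k i with hk | hk
    · subst hk
      rw [hvi]
      have := hparts j
      linarith
    rcases eq_or_ne k j with hk2 | hk2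
    · subst hk2
      rw [hvj]
      have := hparts i
      linarith
    · rw [hvk k hk hk2]
      have h1 : (k:ℕ) < m := k.isLt
      have h2 : ((k:ℕ):ℤ) < (m:ℤ) := by exact_mod_cast h1
      have := hnonneg k
      linarith
  · intro x y hxy
    by_contra h
    exact habs x y h (by rw [hxy])
end

section
/- Let r ≥ 1, let δ be an integer, and set ρ̂ = (−δ/2, −δ/2 − 1, …, −δ/2 − (r−1)) ∈ ℚ^r. Let λ be a partition with at most r parts. Let (i, j) and (k, l) be two distinct pairs with 1 ≤ i < j ≤ r and 1 ≤ k < l ≤ r, and set ν_1 = s_{ε_i+ε_j}(λ+ρ̂) and ν_2 = s_{ε_k+ε_l}(λ+ρ̂). Assume (λ+ρ̂)_i + (λ+ρ̂)_j > 0 and (λ+ρ̂)_k + (λ+ρ̂)_l > 0, and assume that for each of ν_1 and ν_2 the entries are pairwise distinct and all strictly greater than −δ/2 − r. Then sort(ν_1) ≠ sort(ν_2); equivalently, the partitions sort(ν_1) − ρ̂ and sort(ν_2) − ρ̂ are different. -/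
/-- no repetitions among the terms of the Jantzen sum formula:
Let `δ ∈ ℤ`, `ρ̂ = (−δ/2, −δ/2−1, …, −δ/2−(r−1)) ∈ ℚ^r`, and let `λ` be a
partition with at most `r` parts.  Let `(i,j) ≠ (k,l)` be pairs with `i < j`,
`k < l`, put `ν₁ = s_{ε_i+ε_j}(λ+ρ̂)` and `ν₂ = s_{ε_k+ε_l}(λ+ρ̂)`, and assume
`(λ+ρ̂)_i + (λ+ρ̂)_j > 0`, `(λ+ρ̂)_k + (λ+ρ̂)_l > 0`, and that each of `ν₁, ν₂`
has pairwise distinct entries, all `> −δ/2 − r`.  Then the weakly decreasing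
rearrangements of `ν₁` and `ν₂` (realized by any permutations `σ₁, σ₂` with
`ν₁ ∘ σ₁`, `ν₂ ∘ σ₂` antitone) are different. -/
theorem stmt11 (r : ℕ) (hr : 1 ≤ r) (δ : ℤ)
    (rhohat : Fin r → ℚ) (hrho : rhohat = fun k : Fin r => -(δ : ℚ)/2 - ((k : ℕ) : ℚ))
    (lam : Fin r → ℤ) (hanti : Antitone lam) (hnonneg : ∀ k, 0 ≤ lam k)
    (x : Fin r → ℚ) (hx : x = fun k => (lam k : ℚ) + rhohat k)
    (i j k l : Fin r) (hij : i < j) (hkl : k < l) (hne : (i, j) ≠ (k, l))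
    (ν₁ ν₂ : Fin r → ℚ)
    (hν₁ : ν₁ = fun t => if t = i then -(x j) else if t = j then -(x i) else x t)
    (hν₂ : ν₂ = fun t => if t = k then -(x l) else if t = l then -(x k) else x t)
    (hpos₁ : 0 < x i + x j) (hpos₂ : 0 < x k + x l)
    (hdist₁ : Function.Injective ν₁) (hdist₂ : Function.Injective ν₂)
    (hbig₁ : ∀ t, -(δ : ℚ)/2 - r < ν₁ t) (hbig₂ : ∀ t, -(δ : ℚ)/2 - r < ν₂ t) :
    ∀ σ₁ σ₂ : Equiv.Perm (Fin r), Antitone (ν₁ ∘ σ₁) → Antitone (ν₂ ∘ σ₂) →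
      ν₁ ∘ σ₁ ≠ ν₂ ∘ σ₂ := by
  intro σ₁ σ₂ _ _ heq
  -- x is strictly decreasing
  have hxa : StrictAnti x := by
    intro s t hst
    have h1 : (lam t : ℚ) ≤ lam s := by exact_mod_cast hanti hst.le
    have h2 : ((s : ℕ) : ℚ) < ((t : ℕ) : ℚ) := by exact_mod_cast hst
    rw [hx, hrho]
    dsimp only
    linarith
  have hxinj : Function.Injective x := hxa.injective
  have hxi : 0 < x i := by have := hxa hij; linarith
  have hxk : 0 < x k := by have := hxa hkl; linarith
  have key : ∀ s, ∃ t, ν₂ s = ν₁ t := by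
    intro s
    refine ⟨σ₁ (σ₂⁻¹ s), ?_⟩
    have h := congrFun heq (σ₂⁻¹ s)
    simpa [Function.comp] using h.symm
  have key' : ∀ s, ∃ t, ν₁ s = ν₂ t := by
    intro s
    refine ⟨σ₂ (σ₁⁻¹ s), ?_⟩
    have h := congrFun heq (σ₁⁻¹ s)
    simpa [Function.comp] using h
  by_cases hik : i = k
  · -- i = k, hence j ≠ l
    have hjl : j ≠ l := by
      intro h; exact hne (by rw [hik, h])
    have hjk : j ≠ k := by rw [← hik]; exact hij.ne'
    have hli : l ≠ i := by rw [hik]; exact hkl.ne'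
    by_cases hj0 : x j = 0
    · -- then x l ≠ 0 ; x l occurs in ν₁ but not in ν₂
      have hl0 : x l ≠ 0 := fun h => hjl (hxinj (by rw [hj0, h]))
      obtain ⟨t, ht⟩ := key' l
      rw [hν₁, hν₂] at ht
      simp only at ht
      rw [if_neg hli, if_neg (Ne.symm hjl)] at ht
      split_ifs at ht with h1 h2
      · exact hl0 (by linarith)
      · linarith
      · exact h2 (hxinj ht.symm)
    · -- x j ≠ 0 : x j occurs in ν₂ but not in ν₁
      obtain ⟨t, ht⟩ := key j
      rw [hν₁, hν₂] at ht
      simp only at ht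
      rw [if_neg hjk, if_neg hjl] at ht
      split_ifs at ht with h1 h2
      · exact hj0 (by linarith)
      · linarith
      · exact h2 (hxinj ht.symm)
  · by_cases hil : i = l
    · -- then k < i < j, so x k occurs in ν₁ but not in ν₂
      have hki : k ≠ i := Ne.symm hik
      have hkj : k ≠ j := by
        have : k < j := by rw [← hil] at hkl; exact hkl.trans hij
        exact this.ne
      obtain ⟨t, ht⟩ := key' k
      rw [hν₁, hν₂] at ht
      simp only at ht
      rw [if_neg hki, if_neg hkj] at ht
      split_ifs at ht with h1 h2
      · linarith
      · linarith
      · exact h1 (hxinj ht.symm)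
    · -- i ∉ {k,l} : x i occurs in ν₂ but not in ν₁
      obtain ⟨t, ht⟩ := key i
      rw [hν₁, hν₂] at ht
      simp only at ht
      rw [if_neg hik, if_neg hil] at ht
      split_ifs at ht with h1 h2
      · linarith
      · linarith
      · exact h1 (hxinj ht.symm)
end

section
/- Let r ≥ 1, let δ be an integer, and set ρ̂ = (−δ/2, −δ/2 − 1, …, −δ/2 − (r−1)) ∈ ℚ^r. Let λ be a partition with at most r parts, let 1 ≤ i < j ≤ r with (λ+ρ̂)_i + (λ+ρ̂)_j > 0, and set ν = s_{ε_i+ε_j}(λ+ρ̂). Then the entries of ν are pairwise distinct and all strictly greater than −δ/2 − r if and only if: (λ+ρ̂)_i < δ/2 + r, (λ+ρ̂)_j < δ/2 + r, and for every k ∈ {1,…,r} with k ∉ {i, j} one has (λ+ρ̂)_k ≠ −(λ+ρ̂)_i and (λ+ρ̂)_k ≠ −(λ+ρ̂)_j. -/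
/-- criterion for nonvanishing of `χ₀(s_{ε_i+ε_j} ⋆ λ)`:
Let `δ ∈ ℤ`, `ρ̂ = (−δ/2, −δ/2−1, …, −δ/2−(r−1)) ∈ ℚ^r`, let `λ` be a
partition with at most `r` parts, let `i < j` with `(λ+ρ̂)_i + (λ+ρ̂)_j > 0`,
and let `ν = s_{ε_i+ε_j}(λ+ρ̂)`.  Then the entries of `ν` are pairwise distinct
and all `> −δ/2 − r` if and only if `(λ+ρ̂)_i < δ/2 + r`, `(λ+ρ̂)_j < δ/2 + r`,
and `(λ+ρ̂)_k ≠ −(λ+ρ̂)_i` and `(λ+ρ̂)_k ≠ −(λ+ρ̂)_j` for all `k ∉ {i, j}`. -/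
theorem stmt12 (r : ℕ) (hr : 1 ≤ r) (δ : ℤ)
    (rhohat : Fin r → ℚ) (hrho : rhohat = fun k : Fin r => -(δ : ℚ)/2 - ((k : ℕ) : ℚ))
    (lam : Fin r → ℤ) (hanti : Antitone lam) (hnonneg : ∀ k, 0 ≤ lam k)
    (x : Fin r → ℚ) (hx : x = fun k => (lam k : ℚ) + rhohat k)
    (i j : Fin r) (hij : i < j) (hpos : 0 < x i + x j)
    (ν : Fin r → ℚ)
    (hν : ν = fun k => if k = i then -(x j) else if k = j then -(x i) else x k) :
    (Function.Injective ν ∧ ∀ k, -(δ : ℚ)/2 - r < ν k) ↔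
      (x i < (δ : ℚ)/2 + r ∧ x j < (δ : ℚ)/2 + r ∧
        ∀ k, k ≠ i → k ≠ j → x k ≠ -(x i) ∧ x k ≠ -(x j)) := by
  have hxeq : ∀ k : Fin r, x k = (lam k : ℚ) - (δ : ℚ)/2 - ((k : ℕ) : ℚ) := by
    intro k; rw [hx, hrho]; ring
  have hsa : StrictAnti x := by
    intro a b hab
    rw [hxeq a, hxeq b]
    have h1 : (lam b : ℚ) ≤ (lam a : ℚ) := by exact_mod_cast hanti hab.le
    have h2 : ((a : ℕ) : ℚ) < ((b : ℕ) : ℚ) := by exact_mod_cast hab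
    linarith
  have hinj : Function.Injective x := hsa.injective
  have hνi : ν i = -(x j) := by simp [hν]
  have hνj : ν j = -(x i) := by simp [hν, hij.ne']
  have hνk : ∀ k, k ≠ i → k ≠ j → ν k = x k := by
    intro k hki hkj; simp [hν, hki, hkj]
  constructor
  · rintro ⟨h1, h2⟩
    refine ⟨?_, ?_, ?_⟩
    · have := h2 j; rw [hνj] at this; linarith
    · have := h2 i; rw [hνi] at this; linarith
    · intro k hki hkj
      constructor
      · intro h
        exact hkj (h1 (by rw [hνk k hki hkj, hνj, h]))
      · intro h
        exact hki (h1 (by rw [hνk k hki hkj, hνi, h]))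
  · rintro ⟨h1, h2, h3⟩
    constructor
    · intro a b hab
      by_cases hai : a = i <;> by_cases haj : a = j <;>
        by_cases hbi : b = i <;> by_cases hbj : b = j
      all_goals first
        | (exact absurd (hai ▸ haj : (i : Fin r) = j) hij.ne)
        | (exact absurd (hbi ▸ hbj : (i : Fin r) = j) hij.ne)
        | (subst hai; subst hbi; rfl)
        | (subst haj; subst hbj; rfl)
        | (subst hai; subst hbj;
           rw [hνi, hνj] at hab
           exact absurd (hinj (neg_injective hab).symm) hij.ne)
        | (subst haj; subst hbi;
           rw [hνi, hνj] at hab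
           exact absurd (hinj (neg_injective hab)) hij.ne)
        | (subst hai;
           rw [hνi, hνk b hbi hbj] at hab
           exact absurd hab.symm (h3 b hbi hbj).2)
        | (subst haj;
           rw [hνj, hνk b hbi hbj] at hab
           exact absurd hab.symm (h3 b hbi hbj).1)
        | (subst hbi;
           rw [hνi, hνk a hai haj] at hab
           exact absurd hab (h3 a hai haj).2)
        | (subst hbj;
           rw [hνj, hνk a hai haj] at hab
           exact absurd hab (h3 a hai haj).1)
        | (rw [hνk a hai haj, hνk b hbi hbj] at hab; exact hinj hab)
    · intro k
      by_cases hki : k = i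
      · subst hki; rw [hνi]; linarith
      · by_cases hkj : k = j
        · subst hkj; rw [hνj]; linarith
        · rw [hνk k hki hkj, hxeq k]
          have h4 : (0 : ℚ) ≤ (lam k : ℚ) := by exact_mod_cast hnonneg k
          have h5 : ((k : ℕ) : ℚ) < (r : ℚ) := by exact_mod_cast k.isLt
          linarith
end

section
/- Let r ≥ 1, let δ be an integer, and set ρ̂ = (−δ/2, −δ/2 − 1, …, −δ/2 − (r−1)) ∈ ℚ^r. Let λ and μ be partitions with at most r parts such that μ ⊊ λ and μ + ρ̂ = w(λ + ρ̂) for some even signed permutation w. Then there exist indices 1 ≤ i < j ≤ r such that (λ+ρ̂)_i + (λ+ρ̂)_j > 0 and the vector ν = s_{ε_i+ε_j}(λ+ρ̂) has pairwise distinct entries, all strictly greater than −δ/2 − r. -/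
/-- `y` is obtained from `x ∈ ℚ^r` by an even signed permutation (an element of
the Weyl group `W(D_r)`: a signed permutation with `∏ i, ε i = 1`). -/
def IsEvenSignedPermOfQ {r : ℕ} (x y : Fin r → ℚ) : Prop :=
  ∃ (σ : Equiv.Perm (Fin r)) (ε : Fin r → ℚ),
    (∀ i, ε i = 1 ∨ ε i = -1) ∧ (∏ i, ε i) = 1 ∧ ∀ i, y i = ε i * x (σ i)

/-!
Put `x = λ + ρ̂` and let `z` be `μ + ρ̂` reindexed so that `z m = ± x m`; both are injective
and bounded below by `-δ/2 - r`. Call `m` unmatched if `x m` is not an entry of `z`. The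
values `x m` at unmatched `m` are exactly the entries of `x` missing from `z`, and their
negatives `z m = -x m` exactly the entries of `z` missing from `x`. Hence
`∑ x - ∑ z = 2 ∑_{unmatched} x m`, which is positive because `μ ⊊ λ`.

With two or more unmatched indices, the two carrying the largest values `x i`, `x j` have
`x i + x j > 0`; as `-x i`, `-x j` are entries of `z` but not of `x`, the reflection keeps the
entries distinct and above the bound. A single unmatched index `i` is where evenness enters:
then `∏ x = ∏ z = -∏ x`, so some `x n` vanishes, and the pair `{i, n}` works.
-/

open Finset Function

section Reflection

variable {ι K : Type*} [DecidableEq ι] [AddGroup K]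

/-- The reflection `s_{ε_i+ε_j}`. -/
def reflEpsAdd (x : ι → K) (i j : ι) : ι → K :=
  fun k => if k = i then -x j else if k = j then -x i else x k

variable {x : ι → K} {i j : ι}

lemma reflEpsAdd_comm : reflEpsAdd x i j = reflEpsAdd x j i := by
  funext k
  unfold reflEpsAdd
  split_ifs <;> simp_all

lemma injective_reflEpsAdd (hx : Injective x) (hij : i ≠ j)
    (hi : ∀ k, k ≠ i → k ≠ j → x k ≠ -x i) (hj : ∀ k, k ≠ i → k ≠ j → x k ≠ -x j) :
    Injective (reflEpsAdd x i j) := by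
  intro a b hab
  unfold reflEpsAdd at hab
  split_ifs at hab <;> grind [Injective, neg_inj]

lemma lt_reflEpsAdd [Preorder K] {L : K} (hx : ∀ k, L < x k) (hi : L < -x i) (hj : L < -x j)
    (k : ι) : L < reflEpsAdd x i j k := by
  unfold reflEpsAdd
  split_ifs
  exacts [hj, hi, hx k]

end Reflection

lemma Finset.exists_ne_add_pos_of_sum_pos {ι M : Type*} [AddCommGroup M] [LinearOrder M]
    [IsOrderedAddMonoid M] {s : Finset ι} {f : ι → M} (hs : 1 < #s) (h : 0 < ∑ i ∈ s, f i) :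
    ∃ i ∈ s, ∃ j ∈ s, i ≠ j ∧ 0 < f i + f j := by
  classical
  obtain ⟨i, hi, hmax⟩ := s.exists_max_image f (card_pos.mp (by omega))
  obtain ⟨j, hj, hmax'⟩ := (s.erase i).exists_max_image f
    (card_pos.mp (by rw [card_erase_of_mem hi]; omega))
  refine ⟨i, hi, j, mem_of_mem_erase hj, (ne_of_mem_erase hj).symm, ?_⟩
  by_contra! hle
  have hj0 : f j ≤ 0 := by
    by_contra! hj0
    exact hle.not_gt (add_pos (hj0.trans_le (hmax j (mem_of_mem_erase hj))) hj0)
  have hrest : ∑ k ∈ (s.erase i).erase j, f k ≤ 0 :=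
    sum_nonpos fun k hk => (hmax' k (mem_of_mem_erase hk)).trans hj0
  rw [← add_sum_erase s f hi, ← add_sum_erase _ f hj, ← add_assoc] at h
  exact h.not_ge (add_nonpos hle hrest)

section SignChange

variable {ι K : Type*} [Fintype ι] [DecidableEq K] {x z : ι → K}

def unmatchedIndices (x z : ι → K) : Finset ι := {m | x m ∉ univ.image z}

lemma image_sdiff_image_eq_image_unmatchedIndices :
    univ.image x \ univ.image z = (unmatchedIndices x z).image x := by
  ext a
  simp only [mem_sdiff, mem_image, mem_univ, true_and, unmatchedIndices, mem_filter]
  aesop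

lemma eq_neg_of_mem_unmatchedIndices [Neg K] (hxz : ∀ m, z m = x m ∨ z m = -x m) {m : ι}
    (hm : m ∈ unmatchedIndices x z) : z m = -x m :=
  (hxz m).resolve_left fun h => by simp_all [unmatchedIndices]

lemma mem_unmatchedIndices_iff [InvolutiveNeg K] (hxz : ∀ m, z m = x m ∨ z m = -x m)
    (hx : Injective x) (hz : Injective z) {m : ι} :
    m ∈ unmatchedIndices x z ↔ ∀ k, x k ≠ z m := by
  simp only [unmatchedIndices, mem_filter, mem_univ, true_and, mem_image, not_exists]
  constructor
  · intro hm k hk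
    have hzm : z m = -x m := (hxz m).resolve_left (hm m)
    rcases hxz k with h | h
    · obtain rfl : k = m := hz (h.trans hk)
      exact hm k hk.symm
    · exact hm k (by rw [h, hk, hzm, neg_neg])
  · intro hm k hk
    rcases hxz k with h | h
    · obtain rfl : k = m := hx (h.symm.trans hk)
      exact hm k hk.symm
    · have hzm : z m = -x m := (hxz m).resolve_left (hm m).symm
      exact hm k (by rw [hzm, ← hk, h, neg_neg])

lemma image_sdiff_image_eq_image_unmatchedIndices' [InvolutiveNeg K]
    (hxz : ∀ m, z m = x m ∨ z m = -x m) (hx : Injective x) (hz : Injective z) :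
    univ.image z \ univ.image x = (unmatchedIndices x z).image z := by
  ext b
  simp only [mem_sdiff, mem_image, mem_univ, true_and, mem_unmatchedIndices_iff hxz hx hz]
  grind

lemma sum_sub_sum_eq_two_mul_sum_unmatchedIndices [CommRing K]
    (hxz : ∀ m, z m = x m ∨ z m = -x m) (hx : Injective x) (hz : Injective z) :
    ∑ m, x m - ∑ m, z m = 2 * ∑ m ∈ unmatchedIndices x z, x m := by
  have h := sum_sdiff_sub_sum_sdiff (s₁ := univ.image z) (s₂ := univ.image x) (f := id)
  rw [image_sdiff_image_eq_image_unmatchedIndices,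
    image_sdiff_image_eq_image_unmatchedIndices' hxz hx hz, sum_image hx.injOn, sum_image hz.injOn,
    sum_image hx.injOn, sum_image hz.injOn] at h
  simp only [id] at h
  rw [← h, sum_congr rfl fun m hm => eq_neg_of_mem_unmatchedIndices hxz hm, sum_neg_distrib]
  ring

lemma prod_eq_zero_of_odd_card_unmatchedIndices [CommRing K] [NoZeroDivisors K] [CharZero K]
    (hxz : ∀ m, z m = x m ∨ z m = -x m) (hx : Injective x) (hz : Injective z)
    (hprod : ∏ m, z m = ∏ m, x m) (hodd : Odd #(unmatchedIndices x z)) : ∏ m, x m = 0 := by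
  set A := univ.image x
  set B := univ.image z
  have hA := prod_sdiff (f := id) (inter_subset_left : A ∩ B ⊆ A)
  have hB := prod_sdiff (f := id) (inter_subset_right : A ∩ B ⊆ B)
  rw [sdiff_inter_self_left, image_sdiff_image_eq_image_unmatchedIndices, prod_image hx.injOn,
    prod_image hx.injOn] at hA
  rw [sdiff_inter_self_right, image_sdiff_image_eq_image_unmatchedIndices' hxz hx hz,
    prod_image hz.injOn, prod_image hz.injOn] at hB
  simp only [id] at hA hB
  rw [prod_congr rfl fun m hm => eq_neg_of_mem_unmatchedIndices hxz hm, prod_neg,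
    hodd.neg_one_pow, neg_one_mul, neg_mul, hA, hprod] at hB
  exact neg_eq_self.mp hB

end SignChange

section

variable {ι K : Type*} [Fintype ι] [DecidableEq ι] [CommRing K] [LinearOrder K]
  [IsStrictOrderedRing K] {x z : ι → K} {L : K}

theorem exists_reflEpsAdd_of_sign_change (hxz : ∀ m, z m = x m ∨ z m = -x m)
    (hx : Injective x) (hz : Injective z) (hprod : ∏ m, z m = ∏ m, x m)
    (hsum : ∑ m, z m < ∑ m, x m) (hxL : ∀ m, L < x m) (hzL : ∀ m, L < z m)
    (hzero : ∀ m, x m = 0 → L < 0) :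
    ∃ i j, i ≠ j ∧ 0 < x i + x j ∧ Injective (reflEpsAdd x i j) ∧
      ∀ k, L < reflEpsAdd x i j k := by
  have hUpos : 0 < ∑ m ∈ unmatchedIndices x z, x m := by
    linarith [sum_sub_sum_eq_two_mul_sum_unmatchedIndices hxz hx hz]
  have hneg : ∀ i ∈ unmatchedIndices x z, ∀ k, x k ≠ -x i := fun i hi k => by
    rw [← eq_neg_of_mem_unmatchedIndices hxz hi]
    exact (mem_unmatchedIndices_iff hxz hx hz).mp hi k
  have hnegL : ∀ i ∈ unmatchedIndices x z, L < -x i := fun i hi =>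
    eq_neg_of_mem_unmatchedIndices hxz hi ▸ hzL i
  by_cases hcard : 1 < #(unmatchedIndices x z)
  · obtain ⟨i, hi, j, hj, hij, hpos⟩ := exists_ne_add_pos_of_sum_pos hcard hUpos
    exact ⟨i, j, hij, hpos,
      injective_reflEpsAdd hx hij (fun k _ _ => hneg i hi k) (fun k _ _ => hneg j hj k),
      lt_reflEpsAdd hxL (hnegL i hi) (hnegL j hj)⟩
  obtain ⟨i, hU⟩ : ∃ i, unmatchedIndices x z = {i} :=
    card_eq_one.mp (by have := (nonempty_of_sum_ne_zero hUpos.ne').card_pos; omega)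
  have hi : i ∈ unmatchedIndices x z := hU ▸ mem_singleton_self i
  have hxi : 0 < x i := by simpa [hU] using hUpos
  obtain ⟨n, -, hn⟩ := prod_eq_zero_iff.mp
    (prod_eq_zero_of_odd_card_unmatchedIndices hxz hx hz hprod (by simp [hU]))
  have hin : i ≠ n := by
    rintro rfl
    exact hxi.ne' hn
  refine ⟨i, n, hin, by rw [hn, add_zero]; exact hxi, injective_reflEpsAdd hx hin
    (fun k _ _ => hneg i hi k) (fun k _ hkn => ?_), lt_reflEpsAdd hxL (hnegL i hi) ?_⟩
  · rw [hn, neg_zero, ← hn]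
    exact hx.ne hkn
  · rw [hn, neg_zero]
    exact hzero n hn

end

lemma IsEvenSignedPermOfQ.exists_perm {r : ℕ} {x y : Fin r → ℚ} (h : IsEvenSignedPermOfQ x y) :
    ∃ σ : Equiv.Perm (Fin r),
      (∀ m, y (σ.symm m) = x m ∨ y (σ.symm m) = -x m) ∧ ∏ m, y m = ∏ m, x m := by
  obtain ⟨σ, ε, hε, hεprod, hy⟩ := h
  refine ⟨σ, fun m => ?_, ?_⟩
  · rw [hy, σ.apply_symm_apply]
    rcases hε (σ.symm m) with h | h <;> simp [h]
  · simp_rw [hy, prod_mul_distrib, hεprod, one_mul]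
    exact Equiv.prod_comp σ x

section Partition

variable {r : ℕ} {lam : Fin r → ℤ}

lemma strictAnti_add_sub_natCast (hl : Antitone lam) (c : ℚ) :
    StrictAnti fun k : Fin r => (lam k : ℚ) + (c - (k : ℕ)) := by
  intro a b hab
  have hlam : (lam b : ℚ) ≤ lam a := by exact_mod_cast hl hab.le
  have hab' : ((a : ℕ) : ℚ) < (b : ℕ) := by exact_mod_cast hab
  linarith

lemma sub_lt_add_sub_natCast (hl : ∀ k, 0 ≤ lam k) (c : ℚ) (k : Fin r) :
    c - r < (lam k : ℚ) + (c - (k : ℕ)) := by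
  have hlam : (0 : ℚ) ≤ lam k := by exact_mod_cast hl k
  have hk : ((k : ℕ) : ℚ) < r := by exact_mod_cast k.isLt
  linarith

end Partition

theorem stmt13_general (r : ℕ) (δ : ℤ)
    (rhohat : Fin r → ℚ) (hrho : rhohat = fun k : Fin r => -(δ : ℚ)/2 - ((k : ℕ) : ℚ))
    (lam mu : Fin r → ℤ)
    (hlanti : Antitone lam) (hlnonneg : ∀ k, 0 ≤ lam k)
    (hmanti : Antitone mu) (hmnonneg : ∀ k, 0 ≤ mu k)
    (hsub : ∀ k, mu k ≤ lam k) (hne : mu ≠ lam)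
    (hconj : IsEvenSignedPermOfQ (fun k => (lam k : ℚ) + rhohat k)
              (fun k => (mu k : ℚ) + rhohat k)) :
    ∃ i j : Fin r, i < j ∧
      0 < ((lam i : ℚ) + rhohat i) + ((lam j : ℚ) + rhohat j) ∧
      Function.Injective (fun k : Fin r =>
        if k = i then -((lam j : ℚ) + rhohat j)
        else if k = j then -((lam i : ℚ) + rhohat i)
        else (lam k : ℚ) + rhohat k) ∧
      ∀ k : Fin r, -(δ : ℚ)/2 - r <
        (if k = i then -((lam j : ℚ) + rhohat j)
        else if k = j then -((lam i : ℚ) + rhohat i)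
        else (lam k : ℚ) + rhohat k) := by
  subst hrho
  obtain ⟨σ, hxz, hprod⟩ := hconj.exists_perm
  have hsum : ∑ k, ((mu k : ℚ) + (-(δ : ℚ) / 2 - (k : ℕ))) <
      ∑ k, ((lam k : ℚ) + (-(δ : ℚ) / 2 - (k : ℕ))) := by
    obtain ⟨k, hk⟩ := Function.ne_iff.mp hne
    refine sum_lt_sum (fun l _ => ?_) ⟨k, mem_univ k, ?_⟩
    · gcongr
      exact_mod_cast hsub l
    · gcongr
      exact_mod_cast lt_of_le_of_ne (hsub k) hk
  obtain ⟨i, j, hij, hpos, hinj, hlt⟩ :=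
    exists_reflEpsAdd_of_sign_change (L := -(δ : ℚ) / 2 - r) hxz
      (strictAnti_add_sub_natCast hlanti _).injective
      ((strictAnti_add_sub_natCast hmanti _).injective.comp σ.symm.injective)
      ((σ.symm.prod_comp _).trans hprod) ((σ.symm.sum_comp _).trans_lt hsum)
      (sub_lt_add_sub_natCast hlnonneg _) (fun m => sub_lt_add_sub_natCast hmnonneg _ (σ.symm m))
      (fun m hm => by linarith [sub_lt_add_sub_natCast hlnonneg (-(δ : ℚ) / 2) m])
  rcases hij.lt_or_gt with h | h
  · exact ⟨i, j, h, hpos, hinj, hlt⟩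
  · rw [reflEpsAdd_comm] at hinj hlt
    exact ⟨j, i, h, by linarith, hinj, hlt⟩

/-- Let `δ ∈ ℤ`, `ρ̂ = (−δ/2, −δ/2−1, …, −δ/2−(r−1)) ∈ ℚ^r`, and
let `λ, μ` be partitions with at most `r` parts such that `μ ⊊ λ` and `λ, μ`
are conjugate under the star action of `W(D_r)` (`μ + ρ̂ = w(λ + ρ̂)` for an
even signed permutation `w`).  Then there are `i < j` such that
`(λ+ρ̂)_i + (λ+ρ̂)_j > 0` and `ν = s_{ε_i+ε_j}(λ+ρ̂)` has pairwise distinct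
entries, all `> −δ/2 − r`. -/
theorem stmt13 (r : ℕ) (hr : 1 ≤ r) (δ : ℤ)
    (rhohat : Fin r → ℚ) (hrho : rhohat = fun k : Fin r => -(δ : ℚ)/2 - ((k : ℕ) : ℚ))
    (lam mu : Fin r → ℤ)
    (hlanti : Antitone lam) (hlnonneg : ∀ k, 0 ≤ lam k)
    (hmanti : Antitone mu) (hmnonneg : ∀ k, 0 ≤ mu k)
    (hsub : ∀ k, mu k ≤ lam k) (hne : mu ≠ lam)
    (hconj : IsEvenSignedPermOfQ (fun k => (lam k : ℚ) + rhohat k)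
              (fun k => (mu k : ℚ) + rhohat k)) :
    ∃ i j : Fin r, i < j ∧
      0 < ((lam i : ℚ) + rhohat i) + ((lam j : ℚ) + rhohat j) ∧
      Function.Injective (fun k : Fin r =>
        if k = i then -((lam j : ℚ) + rhohat j)
        else if k = j then -((lam i : ℚ) + rhohat i)
        else (lam k : ℚ) + rhohat k) ∧
      ∀ k : Fin r, -(δ : ℚ)/2 - r <
        (if k = i then -((lam j : ℚ) + rhohat j)
        else if k = j then -((lam i : ℚ) + rhohat i)
        else (lam k : ℚ) + rhohat k) :=
  stmt13_general r δ rhohat hrho lam mu hlanti hlnonneg hmanti hmnonneg hsub hne hconj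
end

section
/- Let r ≥ 1 and let λ, μ ∈ ℝ^r be strictly decreasing tuples with μ = w(λ) for some signed permutation w. Let a > 0 be a real number such that a occurs as an entry of λ but −a does not occur as an entry of λ. Then a or −a occurs as an entry of the pointwise minimum λ ∩ μ. -/
/-! Let `a = λ i` and `μ j = ±a`. If `μ j = a`, both tuples are `≥ a` at `min i j` and one of
them equals `a` there. If `μ j = -a`, the index `j` works unless `λ j < -a`, and `i` works unless
`μ i < a`. In the remaining case `i < j`, and the entries of absolute value `< a` occupy at most
the open interval `(i, j)` in `λ` but at least `[i, j)` in `μ`; this is impossible, since a signed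
permutation preserves the number of entries of absolute value `< a`. -/

open Finset

namespace IsSignedPermOf

variable {r : ℕ} {x y : Fin r → ℝ}

lemma exists_perm_abs_eq (h : IsSignedPermOf x y) :
    ∃ σ : Equiv.Perm (Fin r), ∀ i, |y i| = |x (σ i)| := by
  obtain ⟨σ, ε, hε, hy⟩ := h
  refine ⟨σ, fun i => ?_⟩
  rcases hε i with hεi | hεi <;> simp [hy i, hεi]

lemma card_abs_lt (h : IsSignedPermOf x y) (a : ℝ) :
    #{i | |y i| < a} = #{i | |x i| < a} := by
  obtain ⟨σ, hσ⟩ := h.exists_perm_abs_eq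
  exact card_equiv σ (by simp [hσ])

lemma exists_eq_or_eq_neg (h : IsSignedPermOf x y) (i : Fin r) :
    ∃ j, y j = x i ∨ y j = -x i := by
  obtain ⟨σ, ε, hε, hy⟩ := h
  refine ⟨σ.symm i, ?_⟩
  rcases hε (σ.symm i) with hεi | hεi <;> simp [hy, hεi]

end IsSignedPermOf

lemma min_apply_min_eq_of_antitone {ι α : Type*} [LinearOrder ι] [LinearOrder α]
    {f g : ι → α}
    (hf : Antitone f) (hg : Antitone g) {i j : ι} {c : α} (hi : f i = c) (hj : g j = c) :
    min (f (min i j)) (g (min i j)) = c := by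
  rcases le_total i j with hij | hji
  · rw [min_eq_left hij, hi]
    exact min_eq_left (hj ▸ hg hij)
  · rw [min_eq_right hji, hj]
    exact min_eq_right (hi ▸ hf hji)

lemma card_abs_lt_lt_card_abs_lt {ι : Type*} [Fintype ι] [LinearOrder ι] [LocallyFiniteOrder ι]
    {x y : ι → ℝ} (hx : StrictAnti x) (hy : StrictAnti y) {a : ℝ} {i j : ι} (hij : i < j)
    (hxi : x i = a) (hxj : x j ≤ -a) (hyi : y i < a) (hyj : y j = -a) :
    #{k | |x k| < a} < #{k | |y k| < a} := by
  calc #{k | |x k| < a}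
      ≤ #(Ioo i j) := card_le_card fun k hk => by
        rw [mem_filter_univ, abs_lt] at hk
        exact mem_Ioo.mpr ⟨hx.lt_iff_gt.mp (hxi ▸ hk.2), hx.lt_iff_gt.mp (hxj.trans_lt hk.1)⟩
    _ < #(Ico i j) := by rw [Ico_eq_cons_Ioo hij, card_cons]; exact Nat.lt_succ_self _
    _ ≤ #{k | |y k| < a} := card_le_card fun k hk => by
        rw [mem_Ico] at hk
        rw [mem_filter_univ, abs_lt]
        exact ⟨hyj ▸ hy hk.2, (hy.antitone hk.1).trans_lt hyi⟩

theorem stmt15_general (r : ℕ) (lam mu : Fin r → ℝ)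
    (hlam : StrictAnti lam) (hmu : StrictAnti mu)
    (h : IsSignedPermOf lam mu)
    (a : ℝ) (ha : 0 < a) (hocc : ∃ i, lam i = a) :
    ∃ i, min (lam i) (mu i) = a ∨ min (lam i) (mu i) = -a := by
  obtain ⟨i, hi⟩ := hocc
  obtain ⟨j, hj | hj⟩ := h.exists_eq_or_eq_neg i
  · exact ⟨min i j,
      .inl (min_apply_min_eq_of_antitone hlam.antitone hmu.antitone hi (hj.trans hi))⟩
  rw [hi] at hj
  by_cases hlamj : -a ≤ lam j
  · exact ⟨j, .inr (hj ▸ min_eq_right (hj ▸ hlamj))⟩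
  by_cases hmui : a ≤ mu i
  · exact ⟨i, .inl (hi ▸ min_eq_left (hi ▸ hmui))⟩
  rw [not_le] at hlamj hmui
  have hij : i < j := hlam.lt_iff_gt.mp (by linarith)
  exact absurd (h.card_abs_lt a)
    (card_abs_lt_lt_card_abs_lt hlam hmu hij hi hlamj.le hmui hj).ne'

/-- Let `λ, μ ∈ ℝ^r` be strictly decreasing with `μ = w(λ)` for a
signed permutation `w`.  If `a > 0` occurs as an entry of `λ` but `−a` does
not, then `a` or `−a` occurs as an entry of the pointwise minimum `λ ∩ μ`. -/
theorem stmt15 (r : ℕ) (hr : 1 ≤ r) (lam mu : Fin r → ℝ)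
    (hlam : StrictAnti lam) (hmu : StrictAnti mu)
    (h : IsSignedPermOf lam mu)
    (a : ℝ) (ha : 0 < a) (hocc : ∃ i, lam i = a) (hnocc : ∀ i, lam i ≠ -a) :
    ∃ i, min (lam i) (mu i) = a ∨ min (lam i) (mu i) = -a :=
  stmt15_general r lam mu hlam hmu h a ha hocc
end

section
/- Let r ≥ 1, let δ be an integer, and set ρ̂ = (−δ/2, −δ/2 − 1, …, −δ/2 − (r−1)) ∈ ℚ^r. Let λ and μ be partitions with at most r parts such that μ + ρ̂ = w(λ + ρ̂) for some even signed permutation w. Suppose that λ is ⊆-minimal in its orbit, i.e., there is no partition ν with at most r parts such that ν ⊊ λ and ν + ρ̂ = w'(λ + ρ̂) for some even signed permutation w', and suppose that μ is ⊆-minimal in its orbit in the same sense. Then λ = μ. (In other words, every class of partitions conjugate under the star action of W(D_r) contains a unique ⊆-minimal element.) -/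
/-- `x` and `y` are conjugate under the star action of `W(D_r)` with respect to
`ρ̂ = (−δ/2, −δ/2−1, …, −δ/2−(r−1))`: `y + ρ̂ = w(x + ρ̂)` for some even signed
permutation `w`. -/
def StarConjD {r : ℕ} (δ : ℤ) (x y : Fin r → ℤ) : Prop :=
  IsEvenSignedPermOfQ
    (fun k => (x k : ℚ) + (-(δ : ℚ)/2 - ((k : ℕ) : ℚ)))
    (fun k => (y k : ℚ) + (-(δ : ℚ)/2 - ((k : ℕ) : ℚ)))

/-- `lam` is a partition with at most `r` parts: a weakly decreasing tuple of
nonnegative integers. -/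
def IsPartitionTuple {r : ℕ} (lam : Fin r → ℤ) : Prop :=
  Antitone lam ∧ ∀ k, 0 ≤ lam k

/-!
Put `x = λ + ρ̂` and `y = μ + ρ̂`; both are antitone. Two vectors are `W(D_r)`-conjugate exactly
when they have the same multiset of absolute values and the same product. Both invariants pass
from `x` to the pointwise minimum `x ⊓ y = (λ ⊓ μ) + ρ̂`: for a monotone predicate `P`, the
indices where `P` holds at an antitone vector (resp. at its negative) form an initial
(resp. final) segment, so the number of `|(x ⊓ y) i|` satisfying `P` is the minimum of the
positive counts of `x` and `y` plus the maximum of their negative counts, which equals that of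
`x`; and the sign of the product is the parity of that maximal negative count. So `λ ⊓ μ ⊆ λ, μ`
lies in the common orbit, and minimality gives `λ = λ ⊓ μ = μ`.
-/

open Finset

theorem Monotone.apply_min_iff {α : Type*} [LinearOrder α] {P : α → Prop} (hP : Monotone P)
    (a b : α) : P (min a b) ↔ P a ∧ P b := by
  rcases le_total a b with h | h
  · simpa [h] using fun ha => hP h ha
  · simpa [h] using fun hb => hP h hb

theorem Monotone.apply_max_iff {α : Type*} [LinearOrder α] {P : α → Prop} (hP : Monotone P)
    (a b : α) : P (max a b) ↔ P a ∨ P b := by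
  rcases le_total a b with h | h
  · simpa [h] using fun ha => hP h ha
  · simpa [h] using fun hb => hP h hb

theorem Multiset.eq_of_forall_monotone_card_filter_eq {α : Type*} [LinearOrder α]
    {m₁ m₂ : Multiset α}
    (h : ∀ (P : α → Prop) [DecidablePred P], Monotone P →
      card (m₁.filter P) = card (m₂.filter P)) :
    m₁ = m₂ := by
  ext a
  have hcount (m : Multiset α) :
      count a m + card (m.filter (a < ·)) = card (m.filter (a ≤ ·)) := by
    have hor : m.filter (fun b => a = b ∨ a < b) = m.filter (a ≤ ·) :=
      filter_congr fun _ _ => le_iff_eq_or_lt.symm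
    have hand : m.filter (fun b => a = b ∧ a < b) = 0 :=
      filter_eq_nil.2 fun _ _ hb => hb.2.ne hb.1
    rw [count_eq_card_filter_eq, ← card_add, filter_add_filter, hor, hand, add_zero]
  have hle := h (a ≤ ·) fun _ _ hst ha => ha.trans hst
  have hlt := h (a < ·) fun _ _ hst ha => ha.trans_le hst
  have := hcount m₁
  have := hcount m₂
  omega

theorem Multiset.card_filter_univ_val_map {ι α : Type*} [Fintype ι] (f : ι → α) (P : α → Prop)
    [DecidablePred P] : card ((univ.val.map f).filter P) = #{i | P (f i)} := by
  simp [filter_map, Finset.card_def, Finset.filter_val]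

theorem exists_perm_comp_eq_of_univ_val_map_eq {ι α : Type*} [Fintype ι] [DecidableEq α]
    {f g : ι → α} (h : univ.val.map f = univ.val.map g) :
    ∃ σ : Equiv.Perm ι, ∀ i, g (σ i) = f i := by
  have hfiber (c : α) : Fintype.card {i // f i = c} = Fintype.card {i // g i = c} := by
    have := congr(Multiset.count c $h)
    simp only [Multiset.count_map] at this
    simp only [Fintype.card_subtype, @eq_comm _ (f _) c, @eq_comm _ (g _) c]
    exact this
  exact ⟨Equiv.ofFiberEquiv fun c => Fintype.equivOfCardEq (hfiber c), Equiv.ofFiberEquiv_map _⟩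

section NestedFilters

variable {ι : Type*} [LinearOrder ι] [Fintype ι] {p q : ι → Prop} [DecidablePred p]
  [DecidablePred q]

theorem filter_subset_total_of_antitone (hp : Antitone p) (hq : Antitone q) :
    univ.filter p ⊆ univ.filter q ∨ univ.filter q ⊆ univ.filter p :=
  ((isLowerSet_setOfPred.2 hp).total (isLowerSet_setOfPred.2 hq)).imp
    (fun h => monotone_filter_right _ fun i _ => @h i)
    (fun h => monotone_filter_right _ fun i _ => @h i)

theorem filter_subset_total_of_monotone (hp : Monotone p) (hq : Monotone q) :
    univ.filter p ⊆ univ.filter q ∨ univ.filter q ⊆ univ.filter p :=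
  ((isUpperSet_setOfPred.2 hp).total (isUpperSet_setOfPred.2 hq)).imp
    (fun h => monotone_filter_right _ fun i _ => @h i)
    (fun h => monotone_filter_right _ fun i _ => @h i)

theorem card_filter_and_of_antitone (hp : Antitone p) (hq : Antitone q) :
    #{i | p i ∧ q i} = min #{i | p i} #{i | q i} := by
  rw [filter_and]
  rcases filter_subset_total_of_antitone hp hq with h | h
  · rw [inter_eq_left.2 h, min_eq_left (card_le_card h)]
  · rw [inter_eq_right.2 h, min_eq_right (card_le_card h)]

theorem card_filter_or_of_monotone (hp : Monotone p) (hq : Monotone q) :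
    #{i | p i ∨ q i} = max #{i | p i} #{i | q i} := by
  rw [filter_or]
  rcases filter_subset_total_of_monotone hp hq with h | h
  · rw [union_eq_right.2 h, max_eq_right (card_le_card h)]
  · rw [union_eq_left.2 h, max_eq_left (card_le_card h)]

end NestedFilters

section AbsCounts

variable {ι α : Type*} [LinearOrder ι] [Fintype ι] [LinearOrder α] {x y : ι → α} {P : α → Prop}
  [DecidablePred P]

theorem card_filter_inf (hP : Monotone P) (hx : Antitone x) (hy : Antitone y) :
    #{i | P ((x ⊓ y) i)} = min #{i | P (x i)} #{i | P (y i)} := by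
  simp only [Pi.inf_apply, hP.apply_min_iff]
  exact card_filter_and_of_antitone (hP.comp_antitone hx) (hP.comp_antitone hy)

variable [AddCommGroup α] [IsOrderedAddMonoid α]

theorem card_filter_neg_inf (hP : Monotone P) (hx : Antitone x) (hy : Antitone y) :
    #{i | P (-(x ⊓ y) i)} = max #{i | P (-x i)} #{i | P (-y i)} := by
  simp only [Pi.inf_apply, ← max_neg_neg, hP.apply_max_iff]
  exact card_filter_or_of_monotone (hP.comp hx.neg) (hP.comp hy.neg)

theorem card_filter_abs_eq_add (hP : Monotone P) (hP0 : ¬P 0) (v : ι → α) :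
    #{i | P |v i|} = #{i | P (v i)} + #{i | P (-v i)} := by
  simp only [abs_eq_max_neg, hP.apply_max_iff]
  rw [filter_or, card_union_of_disjoint (disjoint_filter.2 fun i _ h h' => hP0 ?_)]
  rcases le_total (v i) 0 with hv | hv
  · exact hP hv h
  · exact hP (neg_nonpos.2 hv) h'

theorem card_filter_abs_inf (hP : Monotone P) (hx : Antitone x) (hy : Antitone y)
    (h : #{i | P |x i|} = #{i | P |y i|}) : #{i | P |(x ⊓ y) i|} = #{i | P |x i|} := by
  by_cases hP0 : P 0
  · simp only [filter_true_of_mem fun i _ => hP (abs_nonneg _) hP0]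
  simp only [card_filter_abs_eq_add hP hP0] at h ⊢
  rw [card_filter_inf hP hx hy, card_filter_neg_inf hP hx hy]
  -- whichever of `x`, `y` has fewer positive counts has more negative ones
  omega

theorem univ_val_map_abs_inf (hx : Antitone x) (hy : Antitone y)
    (habs : univ.val.map (fun i => |x i|) = univ.val.map (fun i => |y i|)) :
    univ.val.map (fun i => |(x ⊓ y) i|) = univ.val.map (fun i => |x i|) := by
  refine Multiset.eq_of_forall_monotone_card_filter_eq fun P _ hP => ?_
  have h := congr(Multiset.card (Multiset.filter P $habs))
  simp only [Multiset.card_filter_univ_val_map] at h ⊢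
  exact card_filter_abs_inf hP hx hy h

end AbsCounts

theorem prod_eq_neg_one_pow_mul_prod_abs_s17 {ι R : Type*} [Fintype ι] [CommRing R] [LinearOrder R]
    [IsStrictOrderedRing R] (v : ι → R) :
    ∏ i, v i = (-1) ^ #{i | 0 < -v i} * ∏ i, |v i| := by
  have hv (i : ι) : v i = (if 0 < -v i then -1 else 1) * |v i| := by
    split_ifs with h
    · rw [abs_of_neg (neg_pos.1 h), neg_one_mul, neg_neg]
    · rw [abs_of_nonneg (by linarith), one_mul]
  rw [prod_congr rfl fun i _ => hv i, prod_mul_distrib, prod_ite, prod_const_one, mul_one,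
    prod_const]

section ProdInf

variable {ι R : Type*} [LinearOrder ι] [Fintype ι] [CommRing R] [LinearOrder R]
  [IsStrictOrderedRing R] {x y : ι → R}

theorem prod_inf_eq (hx : Antitone x) (hy : Antitone y)
    (habs : univ.val.map (fun i => |x i|) = univ.val.map (fun i => |y i|))
    (hprod : ∏ i, x i = ∏ i, y i) : ∏ i, (x ⊓ y) i = ∏ i, x i := by
  have habs_xy : ∏ i, |x i| = ∏ i, |y i| := by
    simpa only [prod_eq_multiset_prod] using congr(Multiset.prod $habs)
  have habs_inf : ∏ i, |(x ⊓ y) i| = ∏ i, |x i| := by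
    simpa only [prod_eq_multiset_prod] using
      congr(Multiset.prod $(univ_val_map_abs_inf hx hy habs))
  by_cases h0 : ∏ i, |x i| = 0
  · have hx0 : |∏ i, x i| = 0 := by rwa [abs_prod]
    have hinf0 : |∏ i, (x ⊓ y) i| = 0 := by rwa [abs_prod, habs_inf]
    rw [abs_eq_zero.1 hx0, abs_eq_zero.1 hinf0]
  have hsign : ((-1 : R)) ^ #{i | 0 < -x i} = (-1) ^ #{i | 0 < -y i} := by
    rw [prod_eq_neg_one_pow_mul_prod_abs_s17 x, prod_eq_neg_one_pow_mul_prod_abs_s17 y, ← habs_xy]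
      at hprod
    exact mul_right_cancel₀ h0 hprod
  rw [prod_eq_neg_one_pow_mul_prod_abs_s17, prod_eq_neg_one_pow_mul_prod_abs_s17 x, habs_inf,
    card_filter_neg_inf (fun _ _ hst h => h.trans_le hst) hx hy]
  rcases max_choice #{i | 0 < -x i} #{i | 0 < -y i} with h | h <;> rw [h]
  rw [hsign]

end ProdInf

theorem isEvenSignedPermOfQ_of_abs_eq {r : ℕ} {x y : Fin r → ℚ} {σ : Equiv.Perm (Fin r)}
    (hσ : ∀ i, |x (σ i)| = |y i|) (hprod : ∏ i, x i = ∏ i, y i) : IsEvenSignedPermOfQ x y := by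
  set ε : Fin r → ℚ := fun i => if y i = x (σ i) then 1 else -1
  have hε (i : Fin r) : ε i = 1 ∨ ε i = -1 := by
    simp only [ε]
    split_ifs <;> simp
  have hy (i : Fin r) : y i = ε i * x (σ i) := by
    simp only [ε]
    split_ifs with h
    · simp [h]
    · rcases abs_eq_abs.1 (hσ i) with h' | h'
      · exact absurd h'.symm h
      · linarith
  have hprod_y : ∏ i, y i = (∏ i, ε i) * ∏ i, x i := by
    simp only [hy, prod_mul_distrib, Equiv.prod_comp]
  have hε_sq : (∏ i, ε i) * ∏ i, ε i = 1 := by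
    rw [← prod_mul_distrib]
    exact prod_eq_one fun i _ => by rcases hε i with h | h <;> simp [h]
  rcases mul_self_eq_one_iff.1 hε_sq with hε_one | hε_neg
  · exact ⟨σ, ε, hε, hε_one, hy⟩
  -- Now `∏ y = -∏ x`, so some `x (σ k)` vanishes and the sign at `k` may be flipped.
  rw [hε_neg, neg_one_mul] at hprod_y
  obtain ⟨j, -, hj⟩ := prod_eq_zero_iff.1 (by linarith : ∏ i, x i = 0)
  obtain ⟨k, hk⟩ : ∃ k, x (σ k) = 0 := ⟨σ.symm j, by simpa using hj⟩
  refine ⟨σ, ε * Pi.mulSingle k (-1), fun i => ?_, ?_, fun i => ?_⟩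
  · rcases eq_or_ne i k with rfl | h
    · rcases hε i with h | h <;> simp [h]
    · simpa [Pi.mulSingle_eq_of_ne h] using hε i
  · simp [prod_mul_distrib, prod_pi_mulSingle', hε_neg]
  · rcases eq_or_ne i k with rfl | h
    · simp [hy, hk]
    · simp [Pi.mulSingle_eq_of_ne h, hy]

theorem isEvenSignedPermOfQ_iff {r : ℕ} {x y : Fin r → ℚ} :
    IsEvenSignedPermOfQ x y ↔
      univ.val.map (fun i => |x i|) = univ.val.map (fun i => |y i|) ∧ ∏ i, x i = ∏ i, y i := by
  constructor
  · rintro ⟨σ, ε, hε, hprod, hy⟩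
    have habs (i : Fin r) : |y i| = |x (σ i)| := by rcases hε i with h | h <;> simp [hy, h]
    refine ⟨?_, ?_⟩
    · calc univ.val.map (fun i => |x i|) = (univ.val.map σ).map (fun i => |x i|) := by
            rw [Multiset.map_univ_val_equiv]
        _ = univ.val.map (fun i => |y i|) := by
            simp only [Multiset.map_map, Function.comp_def, habs]
    · rw [funext hy, prod_mul_distrib, hprod, one_mul, Equiv.prod_comp]
  · rintro ⟨habs, hprod⟩
    obtain ⟨σ, hσ⟩ := exists_perm_comp_eq_of_univ_val_map_eq habs.symm
    exact isEvenSignedPermOfQ_of_abs_eq hσ hprod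

theorem IsEvenSignedPermOfQ.symm {r : ℕ} {x y : Fin r → ℚ} (h : IsEvenSignedPermOfQ x y) :
    IsEvenSignedPermOfQ y x := by
  obtain ⟨habs, hprod⟩ := isEvenSignedPermOfQ_iff.1 h
  exact isEvenSignedPermOfQ_iff.2 ⟨habs.symm, hprod.symm⟩

theorem IsEvenSignedPermOfQ.inf {r : ℕ} {x y : Fin r → ℚ} (hx : Antitone x) (hy : Antitone y)
    (h : IsEvenSignedPermOfQ x y) : IsEvenSignedPermOfQ x (x ⊓ y) := by
  obtain ⟨habs, hprod⟩ := isEvenSignedPermOfQ_iff.1 h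
  exact isEvenSignedPermOfQ_iff.2
    ⟨(univ_val_map_abs_inf hx hy habs).symm, (prod_inf_eq hx hy habs hprod).symm⟩

section StarAction

variable {r : ℕ} {δ : ℤ} {x y : Fin r → ℤ}

def addRhoHat (δ : ℤ) (x : Fin r → ℤ) : Fin r → ℚ :=
  fun k => (x k : ℚ) + (-(δ : ℚ) / 2 - ((k : ℕ) : ℚ))

theorem starConjD_iff : StarConjD δ x y ↔ IsEvenSignedPermOfQ (addRhoHat δ x) (addRhoHat δ y) :=
  Iff.rfl

theorem Antitone.addRhoHat (hx : Antitone x) : Antitone (addRhoHat δ x) := fun a b hab => by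
  have hxab : (x b : ℚ) ≤ x a := Int.cast_le.2 (hx hab)
  have hab' : ((a : ℕ) : ℚ) ≤ (b : ℕ) := Nat.cast_le.2 hab
  simp only [_root_.addRhoHat]
  linarith

theorem addRhoHat_inf : addRhoHat δ (x ⊓ y) = addRhoHat δ x ⊓ addRhoHat δ y := by
  ext k
  simp only [addRhoHat, Pi.inf_apply, Int.cast_min, min_add_add_right]

theorem StarConjD.symm (h : StarConjD δ x y) : StarConjD δ y x :=
  IsEvenSignedPermOfQ.symm h

theorem StarConjD.inf (hx : Antitone x) (hy : Antitone y) (h : StarConjD δ x y) :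
    StarConjD δ x (x ⊓ y) := by
  rw [starConjD_iff, addRhoHat_inf]
  exact IsEvenSignedPermOfQ.inf hx.addRhoHat hy.addRhoHat h

end StarAction

theorem stmt17_general (r : ℕ) (δ : ℤ)
    (lam mu : Fin r → ℤ)
    (hlam : IsPartitionTuple lam) (hmu : IsPartitionTuple mu)
    (hconj : StarConjD δ lam mu)
    (hlmin : ¬ ∃ nu : Fin r → ℤ, IsPartitionTuple nu ∧
      (∀ k, nu k ≤ lam k) ∧ nu ≠ lam ∧ StarConjD δ lam nu)
    (hmmin : ¬ ∃ nu : Fin r → ℤ, IsPartitionTuple nu ∧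
      (∀ k, nu k ≤ mu k) ∧ nu ≠ mu ∧ StarConjD δ mu nu) :
    lam = mu := by
  have hinf : IsPartitionTuple (lam ⊓ mu) :=
    ⟨hlam.1.inf hmu.1, fun k => le_inf (hlam.2 k) (hmu.2 k)⟩
  have hlam_inf : StarConjD δ lam (lam ⊓ mu) := hconj.inf hlam.1 hmu.1
  have hmu_inf : StarConjD δ mu (lam ⊓ mu) := inf_comm mu lam ▸ hconj.symm.inf hmu.1 hlam.1
  have h₁ : lam ⊓ mu = lam := by
    by_contra hne
    exact hlmin ⟨lam ⊓ mu, hinf, fun _ => inf_le_left, hne, hlam_inf⟩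
  have h₂ : lam ⊓ mu = mu := by
    by_contra hne
    exact hmmin ⟨lam ⊓ mu, hinf, fun _ => inf_le_right, hne, hmu_inf⟩
  exact h₁.symm.trans h₂

/-- every class of partitions conjugate under the star action of
`W(D_r)` contains a unique `⊆`-minimal element: if `λ` and `μ` are star
conjugate partitions and each is `⊆`-minimal in its orbit (no partition `ν ⊊ λ`
resp. `ν ⊊ μ` is star conjugate to it), then `λ = μ`. -/
theorem stmt17 (r : ℕ) (hr : 1 ≤ r) (δ : ℤ)
    (lam mu : Fin r → ℤ)
    (hlam : IsPartitionTuple lam) (hmu : IsPartitionTuple mu)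
    (hconj : StarConjD δ lam mu)
    (hlmin : ¬ ∃ nu : Fin r → ℤ, IsPartitionTuple nu ∧
      (∀ k, nu k ≤ lam k) ∧ nu ≠ lam ∧ StarConjD δ lam nu)
    (hmmin : ¬ ∃ nu : Fin r → ℤ, IsPartitionTuple nu ∧
      (∀ k, nu k ≤ mu k) ∧ nu ≠ mu ∧ StarConjD δ mu nu) :
    lam = mu :=
  stmt17_general r δ lam mu hlam hmu hconj hlmin hmmin
end
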